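/- arXiv:1407.4153 — 11 statements merged into one kernel-verified Lean document; each statement's English description precedes it below -/
import Mathlib

section
/- For all real numbers 0 < α < 1/2 and integers n ≥ 2, the sum μ = Σ_{j=0}^∞ 1/((1+j)^{2α} |z − z_j|), where z_j = 2j+1 and z lies on the boundary of the square D_n = {z : |Re z − (2n+1)| ≤ 1/2, |Im z| ≤ 1/2}, satisfies μ ≤ (M(α) + 2 log n)/n^{2α}, where M(α) = 6 + (4/3)/(1−2α) + 1/(3α). -/
/-!
Write `d_j = ‖z - z_j‖`. As `|Re z - z_n| ≤ 1/2`, `d_j ≥ (3/2)|n - j|` for `j ≠ n`, and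
`d_n ≥ 1/2` on the boundary of the square. Split the sum into `j < n`, `j = n`, `n < j ≤ 2n` and
`j > 2n`. For `j < n` one of `1 + j`, `n - j` is at least `n/2`, so the term is at most
`(4/3) / (n (1+j)^{2α}) + (4/3) / (n^{2α} (n - j))`; the partial sums of `(1+j)^{-2α}` telescope
(Bernoulli) to `n^{1-2α}/(1-2α)`, and those of `1/k` are at most `1 + log n`. For `n < j ≤ 2n`
the term is at most `(2/3) / (n^{2α} (j - n))`, and for `j > 2n` at most `(2/3) (j - n)^{-1-2α}`,
whose tail telescopes (Bernoulli again) to `(2/3) / (2α n^{2α})`.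
-/

open Finset Real

theorem mul_add_one_rpow_sub_one_le_sub_rpow {p a : ℝ} (hp0 : 0 ≤ p) (hp1 : p ≤ 1)
    (ha : 0 ≤ a) :
    p * (a + 1) ^ (p - 1) ≤ (a + 1) ^ p - a ^ p := by
  have ha1 : 0 < a + 1 := by linarith
  have hs : -1 ≤ -(a + 1)⁻¹ := neg_le_neg (inv_le_one_of_one_le₀ (by linarith))
  have h := rpow_one_add_le_one_add_mul_self hs hp0 hp1
  rw [show 1 + -(a + 1)⁻¹ = a / (a + 1) by field_simp; ring, div_rpow ha ha1.le,
    div_le_iff₀ (rpow_pos_of_pos ha1 p)] at h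
  rw [rpow_sub_one ha1.ne']
  calc p * ((a + 1) ^ p / (a + 1)) = (a + 1) ^ p - (1 + p * -(a + 1)⁻¹) * (a + 1) ^ p := by
        field_simp; ring
    _ ≤ (a + 1) ^ p - a ^ p := by linarith

theorem mul_add_one_rpow_neg_le_sub {A a : ℝ} (hA : 0 ≤ A) (ha : 0 < a) :
    A * (a + 1) ^ (-(1 + A)) ≤ a ^ (-A) - (a + 1) ^ (-A) := by
  have ha1 : 0 < a + 1 := by linarith
  have h := one_add_mul_self_le_rpow_one_add (s := a⁻¹) (by linarith [inv_pos.2 ha])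
    (p := 1 + A) (by linarith)
  rw [show 1 + a⁻¹ = (a + 1) / a by field_simp, div_rpow ha1.le ha.le,
    le_div_iff₀ (rpow_pos_of_pos ha _), rpow_add ha, rpow_add ha1, rpow_one, rpow_one] at h
  rw [rpow_neg ha.le, rpow_neg ha1.le, rpow_neg ha1.le, rpow_add ha1, rpow_one]
  have hu := rpow_pos_of_pos ha A
  have hv := rpow_pos_of_pos ha1 A
  rw [← sub_nonneg] at h ⊢
  have e : (a ^ A)⁻¹ - ((a + 1) ^ A)⁻¹ - A * ((a + 1) * (a + 1) ^ A)⁻¹ =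
      ((a + 1) * (a + 1) ^ A - (1 + (1 + A) * a⁻¹) * (a * a ^ A)) /
        ((a + 1) * (a + 1) ^ A * a ^ A) := by
    field_simp; ring
  rw [e]
  exact div_nonneg h (by positivity)

theorem sum_range_add_one_rpow_neg_le {A : ℝ} (hA0 : 0 ≤ A) (hA1 : A < 1) (m : ℕ) :
    ∑ j ∈ range m, ((j : ℝ) + 1) ^ (-A) ≤ (m : ℝ) ^ (1 - A) / (1 - A) := by
  rw [le_div_iff₀ (by linarith), sum_mul]
  calc ∑ j ∈ range m, ((j : ℝ) + 1) ^ (-A) * (1 - A)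
      ≤ ∑ j ∈ range m, (((j + 1 : ℕ) : ℝ) ^ (1 - A) - (j : ℝ) ^ (1 - A)) := by
        refine sum_le_sum fun j _ => ?_
        have h := mul_add_one_rpow_sub_one_le_sub_rpow (p := 1 - A) (by linarith) (by linarith)
          j.cast_nonneg
        rw [sub_sub_cancel_left] at h
        push_cast
        linarith
    _ = (m : ℝ) ^ (1 - A) := by
        rw [sum_range_sub (fun j : ℕ => (j : ℝ) ^ (1 - A))]
        simp [zero_rpow (by linarith : 1 - A ≠ 0)]

theorem sum_range_rpow_neg_one_add_le {A a : ℝ} (hA : 0 < A) (ha : 0 < a) (m : ℕ) :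
    ∑ i ∈ range m, (a + 1 + i) ^ (-(1 + A)) ≤ a ^ (-A) / A := by
  rw [le_div_iff₀ hA, sum_mul]
  calc ∑ i ∈ range m, (a + 1 + i) ^ (-(1 + A)) * A
      ≤ ∑ i ∈ range m, ((a + i) ^ (-A) - (a + (i + 1 : ℕ)) ^ (-A)) := by
        refine sum_le_sum fun i _ => ?_
        have h := mul_add_one_rpow_neg_le_sub hA.le (by positivity : 0 < a + i)
        push_cast
        rw [show a + 1 + i = a + i + 1 by ring, show a + (i + 1) = a + i + 1 by ring]
        linarith
    _ = a ^ (-A) - (a + m) ^ (-A) := by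
        rw [sum_range_sub' (fun i : ℕ => (a + i) ^ (-A))]
        simp
    _ ≤ a ^ (-A) := by linarith [rpow_nonneg (by positivity : 0 ≤ a + m) (-A)]

theorem sum_range_inv_add_one_le_one_add_log (n : ℕ) :
    ∑ i ∈ range n, ((i : ℝ) + 1)⁻¹ ≤ 1 + log n := by
  simpa [harmonic] using harmonic_le_one_add_log n

theorem one_div_rpow_mul_le_of_le_add {A x y N : ℝ} (hA0 : 0 ≤ A) (hA1 : A ≤ 1) (hx : 0 < x)
    (hy : 0 < y) (hN : 0 < N) (hxy : N ≤ x + y) :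
    1 / (x ^ A * y) ≤ 2 / (N * x ^ A) + 2 / (N ^ A * y) := by
  have hxA := rpow_pos_of_pos hx A
  rcases le_total (N / 2) y with hy2 | hx2
  · calc 1 / (x ^ A * y) ≤ 2 / (N * x ^ A) := by
          rw [div_le_div_iff₀ (by positivity) (by positivity)]; nlinarith
      _ ≤ _ := le_add_of_nonneg_right (by positivity)
  · have hNx : N ^ A ≤ 2 * x ^ A :=
      calc N ^ A = 2 ^ A * (N / 2) ^ A := by
            rw [← mul_rpow (by norm_num) (by positivity)]; ring_nf
        _ ≤ 2 * x ^ A := by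
          gcongr
          · exact rpow_le_self_of_one_le (by norm_num) hA1
          · linarith
    calc 1 / (x ^ A * y) ≤ 2 / (N ^ A * y) := by
          rw [div_le_div_iff₀ (by positivity) (by positivity)]; nlinarith
      _ ≤ _ := le_add_of_nonneg_left (by positivity)

theorem three_halves_mul_abs_sub_le_norm_sub {n j : ℕ} (hj : j ≠ n) {z : ℂ}
    (hz : |z.re - (2 * n + 1)| ≤ 1 / 2) :
    3 / 2 * |(n : ℝ) - j| ≤ ‖z - (2 * (j : ℂ) + 1)‖ := by
  have h1 : 1 ≤ |(n : ℝ) - j| := by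
    have := Int.one_le_abs (sub_ne_zero.2 (Int.ofNat_inj.not.2 hj.symm))
    exact_mod_cast this
  have h2 : 2 * |(n : ℝ) - j| - 1 / 2 ≤ |z.re - (2 * j + 1)| := by
    have := abs_sub_abs_le_abs_sub (2 * ((n : ℝ) - j)) (-(z.re - (2 * n + 1)))
    rw [abs_neg, abs_mul, abs_two, show 2 * ((n : ℝ) - j) - -(z.re - (2 * n + 1))
      = z.re - (2 * j + 1) by ring] at this
    linarith
  calc 3 / 2 * |(n : ℝ) - j| ≤ |z.re - (2 * j + 1)| := by linarith
    _ = |(z - (2 * (j : ℂ) + 1)).re| := by simp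
    _ ≤ ‖z - (2 * (j : ℂ) + 1)‖ := Complex.abs_re_le_norm _

theorem half_le_norm_sub_of_mem_frontier {c : ℝ} {z : ℂ}
    (hz : (|z.re - c| = 1 / 2 ∧ |z.im| ≤ 1 / 2) ∨ (|z.re - c| ≤ 1 / 2 ∧ |z.im| = 1 / 2)) :
    1 / 2 ≤ ‖z - c‖ := by
  rcases hz with ⟨h, -⟩ | ⟨-, h⟩
  · calc 1 / 2 = |(z - c).re| := by simp [h]
      _ ≤ ‖z - c‖ := Complex.abs_re_le_norm _
  · calc 1 / 2 = |(z - c).im| := by simp [h]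
      _ ≤ ‖z - c‖ := Complex.abs_im_le_norm _

section InverseDistanceSum

variable {A : ℝ} {n : ℕ} {d : ℕ → ℝ}

theorem sum_one_div_rpow_mul_below_le (hA0 : 0 ≤ A) (hA1 : A < 1) (hn : 0 < n)
    (hd : ∀ j ≠ n, 3 / 2 * |(n : ℝ) - j| ≤ d j) :
    ∑ j ∈ range n, 1 / ((1 + (j : ℝ)) ^ A * d j) ≤
      (4 / 3 / (1 - A) + 4 / 3 * (1 + log n)) / (n : ℝ) ^ A := by
  have hn0 : (0 : ℝ) < n := by exact_mod_cast hn
  have hterm : ∀ j ∈ range n, 1 / ((1 + (j : ℝ)) ^ A * d j) ≤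
      4 / 3 / n * ((j : ℝ) + 1) ^ (-A) +
        4 / 3 / (n : ℝ) ^ A * (((n - 1 - j : ℕ) : ℝ) + 1)⁻¹ := by
    intro j hj
    have hjn : j < n := mem_range.1 hj
    have hgap : ((n - 1 - j : ℕ) : ℝ) + 1 = n - j := by
      rw [Nat.cast_sub (by omega), Nat.cast_sub (by omega)]; push_cast; ring
    have hy : (0 : ℝ) < n - j := by rw [← hgap]; positivity
    have hdj : 3 / 2 * ((n : ℝ) - j) ≤ d j := by
      simpa [abs_of_pos hy] using hd j hjn.ne
    have hxA := rpow_pos_of_pos (by positivity : (0 : ℝ) < 1 + j) A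
    calc 1 / ((1 + (j : ℝ)) ^ A * d j)
        ≤ 2 / 3 * (1 / ((1 + (j : ℝ)) ^ A * (n - j))) := by
          rw [mul_one_div, div_le_div_iff₀ (mul_pos hxA (by linarith)) (by positivity)]
          nlinarith
      _ ≤ 2 / 3 * (2 / (n * (1 + (j : ℝ)) ^ A) + 2 / ((n : ℝ) ^ A * (n - j))) := by
          gcongr
          exact one_div_rpow_mul_le_of_le_add hA0 hA1.le (by positivity) hy hn0 (by linarith)
      _ = _ := by
          rw [hgap, rpow_neg (by positivity), add_comm (j : ℝ)]
          field_simp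
          norm_num
  calc ∑ j ∈ range n, 1 / ((1 + (j : ℝ)) ^ A * d j)
      ≤ 4 / 3 / n * ∑ j ∈ range n, ((j : ℝ) + 1) ^ (-A) +
          4 / 3 / (n : ℝ) ^ A * ∑ j ∈ range n, (((n - 1 - j : ℕ) : ℝ) + 1)⁻¹ := by
        rw [mul_sum, mul_sum, ← sum_add_distrib]
        exact sum_le_sum hterm
    _ ≤ 4 / 3 / n * ((n : ℝ) ^ (1 - A) / (1 - A)) + 4 / 3 / (n : ℝ) ^ A * (1 + log n) := by
        rw [sum_range_reflect (fun i => ((i : ℝ) + 1)⁻¹)]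
        gcongr
        · exact sum_range_add_one_rpow_neg_le hA0 hA1 n
        · exact sum_range_inv_add_one_le_one_add_log n
    _ = _ := by
        rw [rpow_sub hn0, rpow_one]
        field_simp

theorem one_div_rpow_mul_at_le (hA0 : 0 ≤ A) (hn : 0 < n) (hdn : 1 / 2 ≤ d n) :
    1 / ((1 + (n : ℝ)) ^ A * d n) ≤ 2 / (n : ℝ) ^ A := by
  have hnA := rpow_pos_of_pos (Nat.cast_pos.2 hn) A
  rw [div_le_div_iff₀ (mul_pos (by positivity) (by linarith)) hnA]
  nlinarith [rpow_le_rpow (Nat.cast_nonneg n) (by linarith : (n : ℝ) ≤ 1 + n) hA0]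

theorem sum_one_div_rpow_mul_near_above_le (hA0 : 0 ≤ A) (hn : 0 < n)
    (hd : ∀ j ≠ n, 3 / 2 * |(n : ℝ) - j| ≤ d j) :
    ∑ i ∈ range n, 1 / ((1 + ((n + 1 + i : ℕ) : ℝ)) ^ A * d (n + 1 + i)) ≤
      2 / 3 * (1 + log n) / (n : ℝ) ^ A := by
  have hnA := rpow_pos_of_pos (Nat.cast_pos.2 hn) A
  calc ∑ i ∈ range n, 1 / ((1 + ((n + 1 + i : ℕ) : ℝ)) ^ A * d (n + 1 + i))
      ≤ ∑ i ∈ range n, 2 / 3 / (n : ℝ) ^ A * ((i : ℝ) + 1)⁻¹ := by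
        refine sum_le_sum fun i _ => ?_
        have hdi : 3 / 2 * ((i : ℝ) + 1) ≤ d (n + 1 + i) := by
          have := hd (n + 1 + i) (by omega)
          rwa [Nat.cast_add, Nat.cast_add, Nat.cast_one,
            show (n : ℝ) - (n + 1 + i) = -(i + 1) by ring, abs_neg,
            abs_of_pos (by positivity)] at this
        have hnj : (n : ℝ) ^ A ≤ (1 + ((n + 1 + i : ℕ) : ℝ)) ^ A :=
          rpow_le_rpow (Nat.cast_nonneg n) (by push_cast; linarith) hA0
        calc 1 / ((1 + ((n + 1 + i : ℕ) : ℝ)) ^ A * d (n + 1 + i))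
            ≤ 1 / ((n : ℝ) ^ A * (3 / 2 * ((i : ℝ) + 1))) := by
              gcongr
          _ = _ := by field_simp
    _ ≤ 2 / 3 / (n : ℝ) ^ A * (1 + log n) := by
        rw [← mul_sum]
        gcongr
        exact sum_range_inv_add_one_le_one_add_log n
    _ = _ := by ring

theorem sum_one_div_rpow_mul_far_above_le (hA : 0 < A) (hn : 0 < n)
    (hd : ∀ j ≠ n, 3 / 2 * |(n : ℝ) - j| ≤ d j) (m : ℕ) :
    ∑ i ∈ range m, 1 / ((1 + ((n + 1 + n + i : ℕ) : ℝ)) ^ A * d (n + 1 + n + i)) ≤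
      2 / 3 / A / (n : ℝ) ^ A := by
  have hn0 : (0 : ℝ) < n := Nat.cast_pos.2 hn
  calc ∑ i ∈ range m, 1 / ((1 + ((n + 1 + n + i : ℕ) : ℝ)) ^ A * d (n + 1 + n + i))
      ≤ ∑ i ∈ range m, 2 / 3 * ((n : ℝ) + 1 + i) ^ (-(1 + A)) := by
        refine sum_le_sum fun i _ => ?_
        have hx : (0 : ℝ) < n + 1 + i := by positivity
        have hdi : 3 / 2 * ((n : ℝ) + 1 + i) ≤ d (n + 1 + n + i) := by
          have := hd (n + 1 + n + i) (by omega)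
          rwa [Nat.cast_add, Nat.cast_add, Nat.cast_add, Nat.cast_one,
            show (n : ℝ) - (n + 1 + n + i) = -(n + 1 + i) by ring, abs_neg,
            abs_of_pos hx] at this
        have hnj : ((n : ℝ) + 1 + i) ^ A ≤ (1 + ((n + 1 + n + i : ℕ) : ℝ)) ^ A :=
          rpow_le_rpow hx.le (by push_cast; linarith) hA.le
        calc 1 / ((1 + ((n + 1 + n + i : ℕ) : ℝ)) ^ A * d (n + 1 + n + i))
            ≤ 1 / (((n : ℝ) + 1 + i) ^ A * (3 / 2 * ((n : ℝ) + 1 + i))) := by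
              gcongr
          _ = _ := by
              rw [rpow_neg hx.le, rpow_add hx, rpow_one]
              field_simp
    _ ≤ 2 / 3 * ((n : ℝ) ^ (-A) / A) := by
        rw [← mul_sum]
        gcongr
        exact sum_range_rpow_neg_one_add_le hA hn0 m
    _ = _ := by
        rw [rpow_neg hn0.le]
        field_simp

theorem tsum_one_div_rpow_mul_le (hA0 : 0 < A) (hA1 : A < 1) (hn : 0 < n)
    (hd : ∀ j ≠ n, 3 / 2 * |(n : ℝ) - j| ≤ d j) (hdn : 1 / 2 ≤ d n) :
    ∑' j : ℕ, 1 / ((1 + (j : ℝ)) ^ A * d j) ≤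
      (4 + 4 / 3 / (1 - A) + 2 / 3 / A + 2 * log n) / (n : ℝ) ^ A := by
  set f : ℕ → ℝ := fun j => 1 / ((1 + (j : ℝ)) ^ A * d j)
  have hf : ∀ j, 0 ≤ f j := fun j => by
    have : 0 ≤ d j := by
      rcases eq_or_ne j n with rfl | hj
      · linarith
      · exact le_trans (by positivity) (hd j hj)
    positivity
  refine Real.tsum_le_of_sum_range_le hf fun m => ?_
  calc ∑ j ∈ range m, f j ≤ ∑ j ∈ range (n + 1 + n + m), f j :=
        sum_le_sum_of_subset_of_nonneg (range_subset_range.2 (by omega)) fun j _ _ => hf j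
    _ = ∑ j ∈ range n, f j + f n + ∑ i ∈ range n, f (n + 1 + i) +
          ∑ i ∈ range m, f (n + 1 + n + i) := by
        rw [sum_range_add, sum_range_add, sum_range_succ]
    _ ≤ (4 / 3 / (1 - A) + 4 / 3 * (1 + log n)) / (n : ℝ) ^ A + 2 / (n : ℝ) ^ A +
          2 / 3 * (1 + log n) / (n : ℝ) ^ A + 2 / 3 / A / (n : ℝ) ^ A := by
        gcongr
        · exact sum_one_div_rpow_mul_below_le hA0.le hA1 hn hd
        · exact one_div_rpow_mul_at_le hA0.le hn hdn
        · exact sum_one_div_rpow_mul_near_above_le hA0.le hn hd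
        · exact sum_one_div_rpow_mul_far_above_le hA0 hn hd m
    _ = _ := by ring

end InverseDistanceSum

/-- bound on μ = Σ_j 1/((1+j)^{2α} |z − z_j|) for z on ∂D_n. -/
theorem stmt0 (α : ℝ) (hα0 : 0 < α) (hα : α < 1/2) (n : ℕ) (hn : 2 ≤ n)
    (z : ℂ)
    (hz : (|z.re - (2*(n:ℝ)+1)| = 1/2 ∧ |z.im| ≤ 1/2) ∨
          (|z.re - (2*(n:ℝ)+1)| ≤ 1/2 ∧ |z.im| = 1/2)) :
    ∑' j : ℕ, 1 / ((1 + (j:ℝ)) ^ (2*α) * ‖z - (2*(j:ℂ)+1)‖) ≤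
      ((6 + (4/3)/(1-2*α) + 1/(3*α)) + 2 * Real.log n) / (n:ℝ) ^ (2*α) := by
  have hre : |z.re - (2 * n + 1)| ≤ 1 / 2 := by
    rcases hz with ⟨h, -⟩ | ⟨h, -⟩ <;> linarith
  have hcentre : 1 / 2 ≤ ‖z - (2 * (n : ℂ) + 1)‖ := by
    simpa using half_le_norm_sub_of_mem_frontier hz
  calc ∑' j : ℕ, 1 / ((1 + (j : ℝ)) ^ (2 * α) * ‖z - (2 * (j : ℂ) + 1)‖)
      ≤ (4 + 4 / 3 / (1 - 2 * α) + 2 / 3 / (2 * α) + 2 * log n) / (n : ℝ) ^ (2 * α) :=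
        tsum_one_div_rpow_mul_le (by linarith) (by linarith) (by omega)
          (fun j hj => three_halves_mul_abs_sub_le_norm_sub hj hre) hcentre
    _ ≤ _ := by
        rw [show 2 / 3 / (2 * α) = 1 / (3 * α) by field_simp]
        gcongr
        norm_num
end

section
/- For every real β with 0 < β ≤ 1 there is a constant M depending only on β such that for every integer n ≥ 2 the sum s = Σ_{j≥0, j≠n} 1/((1+j)^β |n−j|) satisfies s ≤ M n^{−β} log(en). -/
open Finset Real

/-- Harmonic sum bound: ∑_{j<n} 1/(j+1) ≤ log(e n). -/
lemma harm_bound (n : ℕ) (hn : 1 ≤ n) :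
    ∑ j ∈ Finset.range n, (1 : ℝ) / ((j : ℝ) + 1) ≤ Real.log (Real.exp 1 * n) := by
  have hn0 : (0 : ℝ) < n := by positivity
  have h1 : (∑ j ∈ Finset.range n, (1 : ℝ) / ((j : ℝ) + 1)) = ((harmonic n : ℚ) : ℝ) := by
    rw [harmonic]
    push_cast
    refine Finset.sum_congr rfl fun j _ => ?_
    rw [one_div]
  rw [h1, Real.log_mul (Real.exp_pos 1).ne' hn0.ne', Real.log_exp]
  exact_mod_cast harmonic_le_one_add_log n

/-- for 0 < β ≤ 1 there is M with Σ_{j≠n} 1/((1+j)^β |n−j|) ≤ M n^{−β} log(en). -/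
theorem stmt2 (β : ℝ) (hβ0 : 0 < β) (hβ1 : β ≤ 1) :
    ∃ M : ℝ, ∀ n : ℕ, 2 ≤ n →
      ∑' j : ℕ, (if j = n then 0 else 1 / ((1+(j:ℝ))^β * |(n:ℝ) - (j:ℝ)|)) ≤
        M * (n:ℝ)^(-β) * Real.log (Real.exp 1 * n) := by
  refine ⟨3 + 2 / β, fun n hn => ?_⟩
  have hn1 : 1 ≤ n := le_trans (by norm_num) hn
  have hn0 : (0 : ℝ) < n := by positivity
  set L : ℝ := Real.log (Real.exp 1 * n) with hLdef
  have hL : 1 ≤ L := by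
    rw [hLdef, Real.log_mul (Real.exp_pos 1).ne' hn0.ne', Real.log_exp]
    have : 0 ≤ Real.log n := Real.log_nonneg (by exact_mod_cast hn1)
    linarith
  have hnb : (0 : ℝ) < (n : ℝ) ^ (-β) := Real.rpow_pos_of_pos hn0 _
  set f : ℕ → ℝ := fun j => if j = n then 0 else 1 / ((1 + (j:ℝ))^β * |(n:ℝ) - (j:ℝ)|) with hfdef
  have hf0 : ∀ j, 0 ≤ f j := by
    intro j
    simp only [hfdef]
    split
    · exact le_rfl
    · positivity
  apply Real.tsum_le_of_sum_range_le hf0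
  intro N
  set N' : ℕ := max N (2 * n + 1) with hN'
  have hNN' : N ≤ N' := le_max_left _ _
  have h2n : 2 * n + 1 ≤ N' := le_max_right _ _
  have step0 : ∑ j ∈ Finset.range N, f j ≤ ∑ j ∈ Finset.range N', f j :=
    Finset.sum_le_sum_of_subset_of_nonneg (Finset.range_subset_range.2 hNN')
      (fun j _ _ => hf0 j)
  refine le_trans step0 ?_
  -- split the range
  have hsplit : ∑ j ∈ Finset.range N', f j
      = ∑ j ∈ Finset.range n, f j + ∑ j ∈ Finset.Ico n (2*n+1), f j
        + ∑ j ∈ Finset.Ico (2*n+1) N', f j := by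
    rw [Finset.range_eq_Ico, ← Finset.sum_Ico_consecutive f (Nat.zero_le (2*n+1)) h2n,
      ← Finset.sum_Ico_consecutive f (Nat.zero_le n) (by omega : n ≤ 2*n+1),
      ← Finset.range_eq_Ico]
  rw [hsplit]
  -- Part A : j < n
  have hA : ∑ j ∈ Finset.range n, f j ≤ 2 * ((n:ℝ)^(-β) * L) := by
    have hpt : ∀ j ∈ Finset.range n, f j ≤
        (n:ℝ)^(-β) * (1 / ((j:ℝ)+1) + 1 / ((n:ℝ)-(j:ℝ))) := by
      intro j hj
      rw [Finset.mem_range] at hj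
      have hjn : j ≠ n := by omega
      have hjr : (j:ℝ) < n := by exact_mod_cast hj
      have h1j : (0:ℝ) < 1 + j := by positivity
      have hnj : (0:ℝ) < (n:ℝ) - j := by linarith
      have habs : |(n:ℝ) - (j:ℝ)| = (n:ℝ) - j := abs_of_pos hnj
      simp only [hfdef, if_neg hjn, habs]
      have h1jn : 1 + (j:ℝ) ≤ n := by
        have : (j:ℝ) + 1 ≤ n := by exact_mod_cast hj
        linarith
      have key1 : (n:ℝ)^(β-1) * (1+(j:ℝ)) ≤ (1+(j:ℝ))^β := by
        have h := Real.rpow_le_rpow_of_nonpos h1j h1jn (by linarith : β - 1 ≤ 0)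
        calc (n:ℝ)^(β-1) * (1+(j:ℝ)) ≤ (1+(j:ℝ))^(β-1) * (1+(j:ℝ)) :=
              mul_le_mul_of_nonneg_right h h1j.le
          _ = (1+(j:ℝ))^β := by
              rw [← Real.rpow_add_one h1j.ne' (β-1)]
              congr 1
              ring
      have hb1 : 1 / ((1+(j:ℝ))^β * ((n:ℝ)-j)) ≤
          (n:ℝ)^(1-β) * (1 / ((1+(j:ℝ)) * ((n:ℝ)-j))) := by
        rw [mul_one_div, div_le_div_iff₀ (by positivity) (by positivity)]
        have h2 : (n:ℝ)^(β-1) * ((1+(j:ℝ)) * ((n:ℝ)-j)) ≤ (1+(j:ℝ))^β * ((n:ℝ)-j) := by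
          have := mul_le_mul_of_nonneg_right key1 hnj.le
          nlinarith [this]
        have hone : (n:ℝ)^(1-β) * (n:ℝ)^(β-1) = 1 := by
          rw [← Real.rpow_add hn0]
          norm_num
        calc (1:ℝ) * ((1 + (j:ℝ)) * ((n:ℝ)-j))
            = (n:ℝ)^(1-β) * ((n:ℝ)^(β-1) * ((1+(j:ℝ)) * ((n:ℝ)-j))) := by
              linear_combination (-((1+(j:ℝ)) * ((n:ℝ)-(j:ℝ)))) * hone
          _ ≤ (n:ℝ)^(1-β) * ((1+(j:ℝ))^β * ((n:ℝ)-j)) :=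
              mul_le_mul_of_nonneg_left h2 (Real.rpow_nonneg hn0.le _)
      have hidentity : 1 / ((1+(j:ℝ)) * ((n:ℝ)-j))
          ≤ (1/(n:ℝ)) * (1 / ((j:ℝ)+1) + 1 / ((n:ℝ)-(j:ℝ))) := by
        have e : (1/(n:ℝ)) * (1 / ((j:ℝ)+1) + 1 / ((n:ℝ)-(j:ℝ)))
            = ((n:ℝ)+1) / ((n:ℝ) * (((j:ℝ)+1) * ((n:ℝ)-(j:ℝ)))) := by
          field_simp
          ring
        rw [e, div_le_div_iff₀ (by positivity) (by positivity)]
        nlinarith [h1j, hnj]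
      calc 1 / ((1+(j:ℝ))^β * ((n:ℝ)-j))
          ≤ (n:ℝ)^(1-β) * (1 / ((1+(j:ℝ)) * ((n:ℝ)-j))) := hb1
        _ ≤ (n:ℝ)^(1-β) * ((1/(n:ℝ)) * (1 / ((j:ℝ)+1) + 1 / ((n:ℝ)-(j:ℝ)))) :=
            mul_le_mul_of_nonneg_left hidentity (Real.rpow_nonneg hn0.le _)
        _ = (n:ℝ)^(-β) * (1 / ((j:ℝ)+1) + 1 / ((n:ℝ)-(j:ℝ))) := by
            rw [← mul_assoc]
            congr 1
            have h' : (n:ℝ)^(1-β) = (n:ℝ) * (n:ℝ)^(-β) := by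
              rw [show (1:ℝ)-β = 1 + (-β) by ring, Real.rpow_add hn0, Real.rpow_one]
            rw [h']
            field_simp
    refine le_trans (Finset.sum_le_sum hpt) ?_
    rw [← Finset.mul_sum]
    have hsum : ∑ j ∈ Finset.range n, (1 / ((j:ℝ)+1) + 1 / ((n:ℝ)-(j:ℝ))) ≤ 2 * L := by
      rw [Finset.sum_add_distrib]
      have e1 : ∑ j ∈ Finset.range n, (1:ℝ) / ((j:ℝ)+1) ≤ L := harm_bound n hn1
      have e2 : ∑ j ∈ Finset.range n, (1:ℝ) / ((n:ℝ)-(j:ℝ)) ≤ L := by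
        have hre : ∑ j ∈ Finset.range n, (1:ℝ) / ((n:ℝ)-(j:ℝ))
            = ∑ j ∈ Finset.range n, (1:ℝ) / ((j:ℝ)+1) := by
          rw [← Finset.sum_range_reflect (fun j => (1:ℝ) / ((j:ℝ)+1)) n]
          refine Finset.sum_congr rfl fun j hj => ?_
          rw [Finset.mem_range] at hj
          congr 1
          have hc : ((n - 1 - j : ℕ) : ℝ) = (n:ℝ) - 1 - j := by
            have h' : n - 1 - j + (j + 1) = n := by omega
            have := congrArg (fun m : ℕ => (m:ℝ)) h'
            push_cast at this
            linarith
          rw [hc]; ring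
        rw [hre]; exact harm_bound n hn1
      linarith
    calc (n:ℝ)^(-β) * ∑ j ∈ Finset.range n, (1 / ((j:ℝ)+1) + 1 / ((n:ℝ)-(j:ℝ)))
        ≤ (n:ℝ)^(-β) * (2*L) := mul_le_mul_of_nonneg_left hsum hnb.le
      _ = 2 * ((n:ℝ)^(-β) * L) := by ring
  -- Part C : n ≤ j ≤ 2n
  have hC : ∑ j ∈ Finset.Ico n (2*n+1), f j ≤ (n:ℝ)^(-β) * L := by
    rw [Finset.sum_eq_sum_Ico_succ_bot (by omega : n < 2*n+1) f]
    have hfn : f n = 0 := by simp [hfdef]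
    rw [hfn, zero_add]
    have hpt : ∀ j ∈ Finset.Ico (n+1) (2*n+1), f j ≤ (n:ℝ)^(-β) * (1 / ((j:ℝ) - n)) := by
      intro j hj
      rw [Finset.mem_Ico] at hj
      have hjn : j ≠ n := by omega
      have hjr : (n:ℝ) < j := by exact_mod_cast hj.1
      have habs : |(n:ℝ) - (j:ℝ)| = (j:ℝ) - n := by
        rw [abs_sub_comm]; exact abs_of_pos (by linarith)
      simp only [hfdef, if_neg hjn, habs]
      have key : (n:ℝ)^β * ((j:ℝ)-n) ≤ (1+(j:ℝ))^β * ((j:ℝ)-n) := by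
        refine mul_le_mul_of_nonneg_right ?_ (by linarith)
        exact Real.rpow_le_rpow hn0.le (by linarith) hβ0.le
      calc 1 / ((1+(j:ℝ))^β * ((j:ℝ)-n)) ≤ 1 / ((n:ℝ)^β * ((j:ℝ)-n)) :=
            one_div_le_one_div_of_le
              (mul_pos (Real.rpow_pos_of_pos hn0 β) (by linarith)) key
        _ = (n:ℝ)^(-β) * (1 / ((j:ℝ) - n)) := by
            rw [Real.rpow_neg hn0.le, one_div, mul_inv, one_div]
    refine le_trans (Finset.sum_le_sum hpt) ?_
    rw [← Finset.mul_sum]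
    refine mul_le_mul_of_nonneg_left ?_ hnb.le
    have hre : ∑ j ∈ Finset.Ico (n+1) (2*n+1), (1:ℝ) / ((j:ℝ) - n)
        = ∑ i ∈ Finset.range n, (1:ℝ) / ((i:ℝ)+1) := by
      rw [Finset.sum_Ico_eq_sum_range]
      have hcard : 2*n+1 - (n+1) = n := by omega
      rw [hcard]
      refine Finset.sum_congr rfl fun i _ => ?_
      congr 1
      push_cast
      ring
    rw [hre]
    exact harm_bound n hn1
  -- Part D : j > 2n
  have hD : ∑ j ∈ Finset.Ico (2*n+1) N', f j ≤ (2/β) * ((n:ℝ)^(-β) * L) := by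
    have hpt : ∀ j ∈ Finset.Ico (2*n+1) N', f j ≤ 2 * ((j:ℝ)+1)^(-(1+β)) := by
      intro j hj
      rw [Finset.mem_Ico] at hj
      have hjn : j ≠ n := by omega
      have hjr : 2*(n:ℝ)+1 ≤ j := by exact_mod_cast hj.1
      have habs : |(n:ℝ) - (j:ℝ)| = (j:ℝ) - n := by
        rw [abs_sub_comm]; exact abs_of_pos (by linarith)
      simp only [hfdef, if_neg hjn, habs]
      have hjpos : (0:ℝ) < 1 + j := by linarith
      have key : ((j:ℝ)+1)^(1+β) / 2 ≤ (1+(j:ℝ))^β * ((j:ℝ)-n) := by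
        have h1 : ((j:ℝ)+1)/2 ≤ (j:ℝ) - n := by linarith
        have h2 : ((j:ℝ)+1)^(1+β) = ((j:ℝ)+1) * ((j:ℝ)+1)^β := by
          rw [Real.rpow_add (by linarith) 1 β, Real.rpow_one]
        rw [h2]
        have : ((j:ℝ)+1)^β = (1+(j:ℝ))^β := by rw [add_comm]
        rw [this]
        calc ((j:ℝ)+1) * (1+(j:ℝ))^β / 2 = (1+(j:ℝ))^β * (((j:ℝ)+1)/2) := by ring
          _ ≤ (1+(j:ℝ))^β * ((j:ℝ)-n) :=
            mul_le_mul_of_nonneg_left h1 (Real.rpow_nonneg hjpos.le _)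
      have hpow : (0:ℝ) < ((j:ℝ)+1)^(1+β) := Real.rpow_pos_of_pos (by linarith) _
      calc 1 / ((1+(j:ℝ))^β * ((j:ℝ)-n)) ≤ 1 / (((j:ℝ)+1)^(1+β) / 2) :=
            one_div_le_one_div_of_le (by positivity) key
        _ = 2 * ((j:ℝ)+1)^(-(1+β)) := by
            rw [Real.rpow_neg (by linarith)]
            field_simp
    refine le_trans (Finset.sum_le_sum hpt) ?_
    rw [← Finset.mul_sum]
    have hint : ∑ j ∈ Finset.Ico (2*n+1) N', ((j:ℝ)+1)^(-(1+β)) ≤ (n:ℝ)^(-β) / β := by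
      have ha0 : (0:ℝ) < ((2*n+1 : ℕ):ℝ) := by positivity
      have hanti : AntitoneOn (fun x : ℝ => x^(-(1+β)))
          (Set.Icc ((2*n+1 : ℕ):ℝ) ((N' : ℕ):ℝ)) := by
        intro x hx y hy hxy
        exact Real.rpow_le_rpow_of_nonpos (lt_of_lt_of_le ha0 hx.1) hxy (by linarith)
      have hs := AntitoneOn.sum_le_integral_Ico h2n hanti
      have hcast : ∑ j ∈ Finset.Ico (2*n+1) N', ((j:ℝ)+1)^(-(1+β))
          = ∑ j ∈ Finset.Ico (2*n+1) N', (fun x : ℝ => x^(-(1+β))) ((j+1 : ℕ):ℝ) := by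
        refine Finset.sum_congr rfl fun j _ => ?_
        push_cast
        rfl
      rw [hcast]
      refine le_trans hs ?_
      have hne : -(1+β) ≠ -1 := by intro h; linarith
      have h0not : (0:ℝ) ∉ Set.uIcc ((2*n+1:ℕ):ℝ) ((N':ℕ):ℝ) := by
        rw [Set.uIcc_of_le (by exact_mod_cast h2n)]
        intro h
        have := h.1
        have : (0:ℝ) < ((2*n+1:ℕ):ℝ) := ha0
        linarith [h.1]
      rw [integral_rpow (Or.inr ⟨hne, h0not⟩)]
      have heq : -(1+β) + 1 = -β := by ring
      rw [heq]
      have hb1 : (0:ℝ) ≤ ((N':ℕ):ℝ)^(-β) := Real.rpow_nonneg (by positivity) _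
      have hb2 : ((2*n+1:ℕ):ℝ)^(-β) ≤ (n:ℝ)^(-β) := by
        refine Real.rpow_le_rpow_of_nonpos hn0 ?_ (by linarith)
        push_cast
        linarith
      have e2 : (((N':ℕ):ℝ)^(-β) - ((2*n+1:ℕ):ℝ)^(-β)) / (-β)
          = (((2*n+1:ℕ):ℝ)^(-β) - ((N':ℕ):ℝ)^(-β)) / β := by
        rw [div_neg, ← neg_div, neg_sub]
      rw [e2]
      gcongr
      linarith
    calc 2 * ∑ j ∈ Finset.Ico (2*n+1) N', ((j:ℝ)+1)^(-(1+β))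
        ≤ 2 * ((n:ℝ)^(-β) / β) := mul_le_mul_of_nonneg_left hint (by norm_num)
      _ = 2 / β * (n:ℝ)^(-β) * 1 := by ring
      _ ≤ 2 / β * (n:ℝ)^(-β) * L := mul_le_mul_of_nonneg_left hL (by positivity)
      _ = (2/β) * ((n:ℝ)^(-β) * L) := by ring

  calc ∑ j ∈ Finset.range n, f j + ∑ j ∈ Finset.Ico n (2*n+1), f j
        + ∑ j ∈ Finset.Ico (2*n+1) N', f j
      ≤ 2 * ((n:ℝ)^(-β) * L) + (n:ℝ)^(-β) * L + (2/β) * ((n:ℝ)^(-β) * L) := by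
        linarith
    _ = (3 + 2/β) * (n:ℝ)^(-β) * L := by ring
end

section
/- For every real β > 1 there exists a constant M such that for all integers n ≥ 2, Σ_{j≥0, j≠n} 1/((1+j)^β |n−j|) ≤ M/n. -/
open Finset

private lemma stmt3_harm (n : ℕ) :
    ∑ j ∈ Finset.range n, (1:ℝ)/(j+1) ≤ 1 + Real.log n := by
  have h := harmonic_le_one_add_log n
  have e : ((harmonic n : ℚ) : ℝ) = ∑ j ∈ Finset.range n, (1:ℝ)/(j+1) := by
    simp [harmonic, one_div]
  linarith [e ▸ h]

/-- for β > 1 there is M with Σ_{j≠n} 1/((1+j)^β |n−j|) ≤ M/n. -/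
theorem stmt3 (β : ℝ) (hβ : 1 < β) :
    ∃ M : ℝ, ∀ n : ℕ, 2 ≤ n →
      ∑' j : ℕ, (if j = n then 0 else 1 / ((1+(j:ℝ))^β * |(n:ℝ) - (j:ℝ)|)) ≤ M / n := by
  have hβ0 : (0:ℝ) < β := by linarith
  have hZs : Summable (fun j : ℕ => 1/((1+(j:ℝ))^β)) := by
    have h1 := (Real.summable_one_div_nat_rpow (p := β)).mpr hβ
    have h2 := (summable_nat_add_iff 1).mpr h1
    refine h2.congr fun j => ?_
    push_cast
    rw [add_comm]
  set Z : ℝ := ∑' j : ℕ, 1/((1+(j:ℝ))^β) with hZdef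
  refine ⟨3*Z + 2^β * 2 * (1 + 1/(β-1)), fun n hn => ?_⟩
  have hN2 : (2:ℝ) ≤ (n:ℝ) := by exact_mod_cast hn
  have hN0 : (0:ℝ) < (n:ℝ) := by linarith
  set f : ℕ → ℝ := fun j => if j = n then 0 else 1 / ((1+(j:ℝ))^β * |(n:ℝ) - (j:ℝ)|) with hfdef
  have hpow : ∀ j : ℕ, (0:ℝ) < (1+(j:ℝ))^β := fun j =>
    Real.rpow_pos_of_pos (by positivity) β
  have habs : ∀ j : ℕ, j ≠ n → (1:ℝ) ≤ |(n:ℝ) - (j:ℝ)| := by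
    intro j hj
    have h1 : ((n:ℤ) - (j:ℤ)) ≠ 0 := by
      intro h; apply hj; omega
    have h2 : (1:ℤ) ≤ |(n:ℤ) - (j:ℤ)| := Int.one_le_abs h1
    calc (1:ℝ) ≤ ((|(n:ℤ) - (j:ℤ)| : ℤ) : ℝ) := by exact_mod_cast h2
      _ = |(n:ℝ) - (j:ℝ)| := by push_cast; rfl
  have hf0 : ∀ j, 0 ≤ f j := by
    intro j; simp only [hfdef]; split
    · exact le_refl 0
    · positivity
  have hfle : ∀ j, f j ≤ 1/((1+(j:ℝ))^β) := by
    intro j; simp only [hfdef]; split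
    · positivity
    · rename_i hj
      rw [one_div, one_div]
      apply inv_anti₀ (hpow j)
      calc (1+(j:ℝ))^β = (1+(j:ℝ))^β * 1 := (mul_one _).symm
        _ ≤ (1+(j:ℝ))^β * |(n:ℝ) - (j:ℝ)| :=
            mul_le_mul_of_nonneg_left (habs j hj) (hpow j).le
  have hfs : Summable f := Summable.of_nonneg_of_le hf0 hfle hZs
  -- tail bound
  have htailS : Summable (fun k : ℕ => f (k + 2*n)) := (summable_nat_add_iff (2*n)).mpr hfs
  have htail : ∑' k : ℕ, f (k + 2*n) ≤ Z / n := by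
    have hterm : ∀ k : ℕ, f (k + 2*n) ≤ (1/(n:ℝ)) * (1/((1+(k:ℝ))^β)) := by
      intro k
      have hne : k + 2*n ≠ n := by omega
      simp only [hfdef, if_neg hne]
      have hcast : ((k + 2*n : ℕ) : ℝ) = (k:ℝ) + 2*n := by push_cast; ring
      have h1 : (1+(k:ℝ))^β ≤ (1+((k + 2*n : ℕ)):ℝ)^β := by
        apply Real.rpow_le_rpow (by positivity) _ hβ0.le
        rw [hcast]; linarith
      have h2 : (n:ℝ) ≤ |(n:ℝ) - ((k + 2*n : ℕ) : ℝ)| := by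
        rw [hcast]
        rw [abs_of_nonpos (by linarith)]
        linarith
      rw [one_div_mul_one_div]
      rw [one_div, one_div]
      apply inv_anti₀ (by positivity)
      calc (n:ℝ) * (1+(k:ℝ))^β = (1+(k:ℝ))^β * n := by ring
        _ ≤ (1+((k + 2*n : ℕ)):ℝ)^β * |(n:ℝ) - ((k + 2*n : ℕ) : ℝ)| :=
            mul_le_mul h1 h2 hN0.le (by positivity)
    calc ∑' k : ℕ, f (k + 2*n) ≤ ∑' k : ℕ, (1/(n:ℝ)) * (1/((1+(k:ℝ))^β)) :=
          Summable.tsum_le_tsum hterm htailS (hZs.mul_left _)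
      _ = (1/(n:ℝ)) * Z := tsum_mul_left
      _ = Z / n := by ring
  -- helper sequence for near part
  set h : ℕ → ℝ := fun j => if j = n then 0 else 1 / |(n:ℝ) - (j:ℝ)| with hhdef
  have hh0 : ∀ j, 0 ≤ h j := by
    intro j; simp only [hhdef]; split
    · exact le_refl 0
    · positivity
  -- sum of h over range n
  have hpart1 : ∑ j ∈ range n, h j ≤ 1 + Real.log n := by
    have e : ∑ j ∈ range n, h j = ∑ j ∈ range n, (1:ℝ)/(j+1) := by
      rw [← Finset.sum_range_reflect (fun j => h j) n]
      apply Finset.sum_congr rfl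
      intro j hj
      have hjn : j < n := Finset.mem_range.mp hj
      have hne : n - 1 - j ≠ n := by omega
      simp only [hhdef, if_neg hne]
      have hc : ((n - 1 - j : ℕ) : ℝ) = (n:ℝ) - 1 - j := by
        have : n - 1 - j = n - (1 + j) := by omega
        rw [this, Nat.cast_sub (by omega)]
        push_cast; ring
      rw [hc]
      rw [abs_of_nonneg (by linarith)]
      norm_num
      ring_nf
    rw [e]; exact stmt3_harm n
  -- sum of h over Ico n (2n)
  have hpart2 : ∑ j ∈ Finset.Ico n (2*n), h j ≤ 1 + Real.log n := by
    rw [Finset.sum_Ico_eq_sum_range]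
    have h2n : 2*n - n = n := by omega
    rw [h2n]
    have hn1 : n = (n-1) + 1 := by omega
    have gen : ∀ (g : ℕ → ℝ), ∑ k ∈ range n, g k
        = ∑ i ∈ range (n-1), g (i+1) + g 0 := by
      intro g
      conv_lhs => rw [hn1]
      exact Finset.sum_range_succ' g (n-1)
    rw [gen (fun k => h (n + k))]
    have e0 : h (n + 0) = 0 := by simp [hhdef]
    rw [e0, add_zero]
    have e : ∀ i ∈ range (n-1), h (n + (i+1)) = (1:ℝ)/(i+1) := by
      intro i _
      have hne : n + (i+1) ≠ n := by omega
      simp only [hhdef, if_neg hne]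
      congr 1
      push_cast
      rw [abs_of_nonpos (by linarith)]
      ring
    rw [Finset.sum_congr rfl e]
    calc ∑ i ∈ range (n-1), (1:ℝ)/(i+1) ≤ 1 + Real.log (n-1 : ℕ) := stmt3_harm (n-1)
      _ ≤ 1 + Real.log n := by
        have h1 : (0:ℝ) < ((n-1 : ℕ):ℝ) := by
          have : 1 ≤ n - 1 := by omega
          exact_mod_cast Nat.lt_of_lt_of_le Nat.zero_lt_one this
        have h2 : ((n-1 : ℕ):ℝ) ≤ (n:ℝ) := by exact_mod_cast Nat.sub_le n 1
        linarith [Real.log_le_log h1 h2]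
  have hhsum : ∑ j ∈ range (2*n), h j ≤ 2 * (1 + Real.log n) := by
    have : range (2*n) = Finset.Ico 0 (2*n) := by rw [Finset.range_eq_Ico]
    rw [this, ← Finset.sum_Ico_consecutive _ (Nat.zero_le n) (by omega : n ≤ 2*n),
      ← Finset.range_eq_Ico]
    linarith
  -- per-term bound on the near part
  have hterm2 : ∀ j ∈ range (2*n),
      f j ≤ 2/(n:ℝ) * (1/((1+(j:ℝ))^β)) + (2/(n:ℝ))^β * h j := by
    intro j _
    by_cases hjn : j = n
    · simp only [hfdef, hhdef, if_pos hjn, mul_zero, add_zero]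
      positivity
    · by_cases hsml : 2*j ≤ n
      · have hjr : 2*(j:ℝ) ≤ (n:ℝ) := by exact_mod_cast hsml
        have hjlt : (j:ℝ) < (n:ℝ) := by linarith
        have habs2 : (n:ℝ)/2 ≤ |(n:ℝ) - (j:ℝ)| := by
          rw [abs_of_nonneg (by linarith)]; linarith
        have key : f j ≤ 2/(n:ℝ) * (1/((1+(j:ℝ))^β)) := by
          simp only [hfdef, if_neg hjn]
          have e : 2/(n:ℝ) * (1/((1+(j:ℝ))^β)) = 1 / ((1+(j:ℝ))^β * ((n:ℝ)/2)) := by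
            field_simp
          rw [e, one_div, one_div]
          apply inv_anti₀ (by positivity)
          exact mul_le_mul_of_nonneg_left habs2 (hpow j).le
        have : 0 ≤ (2/(n:ℝ))^β * h j := by
          have := hh0 j; positivity
        linarith
      · have hjr : (n:ℝ) + 1 ≤ 2*(j:ℝ) := by exact_mod_cast (by omega : n+1 ≤ 2*j)
        have hhalf : (n:ℝ)/2 ≤ 1 + (j:ℝ) := by linarith
        have hrpow : ((n:ℝ)/2)^β ≤ (1+(j:ℝ))^β :=
          Real.rpow_le_rpow (by positivity) hhalf hβ0.le
        have key : f j ≤ (2/(n:ℝ))^β * h j := by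
          simp only [hfdef, hhdef, if_neg hjn]
          have e : (2/(n:ℝ))^β * (1 / |(n:ℝ) - (j:ℝ)|)
              = 1 / (((n:ℝ)/2)^β * |(n:ℝ) - (j:ℝ)|) := by
            rw [show (2/(n:ℝ)) = ((n:ℝ)/2)⁻¹ by rw [inv_div],
              Real.inv_rpow (by positivity)]
            rw [one_div, one_div, mul_inv]
          rw [e, one_div, one_div]
          have habs1 := habs j hjn
          apply inv_anti₀ (by positivity)
          exact mul_le_mul_of_nonneg_right hrpow (by linarith)
        have : 0 ≤ 2/(n:ℝ) * (1/((1+(j:ℝ))^β)) := by positivity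
        linarith
  -- near part total
  have hnear : ∑ j ∈ range (2*n), f j
      ≤ 2/(n:ℝ) * Z + (2/(n:ℝ))^β * (2 * (1 + Real.log n)) := by
    calc ∑ j ∈ range (2*n), f j
        ≤ ∑ j ∈ range (2*n), (2/(n:ℝ) * (1/((1+(j:ℝ))^β)) + (2/(n:ℝ))^β * h j) :=
          Finset.sum_le_sum hterm2
      _ = 2/(n:ℝ) * (∑ j ∈ range (2*n), 1/((1+(j:ℝ))^β)) + (2/(n:ℝ))^β * (∑ j ∈ range (2*n), h j) := by
          rw [Finset.sum_add_distrib, Finset.mul_sum, Finset.mul_sum]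
      _ ≤ 2/(n:ℝ) * Z + (2/(n:ℝ))^β * (2 * (1 + Real.log n)) := by
          have h1 : ∑ j ∈ range (2*n), 1/((1+(j:ℝ))^β) ≤ Z :=
            Summable.sum_le_tsum (range (2*n)) (fun i _ => by positivity) hZs
          have h2 : (0:ℝ) ≤ (2/(n:ℝ))^β := by positivity
          have h3 : (0:ℝ) ≤ 2/(n:ℝ) := by positivity
          gcongr
  -- bound the log term
  have hlog : (2/(n:ℝ))^β * (2 * (1 + Real.log n)) ≤ (2^β * 2 * (1 + 1/(β-1))) / n := by
    have hβ1 : (0:ℝ) < β - 1 := by linarith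
    have h1 : (1:ℝ) ≤ (n:ℝ)^(β-1) := Real.one_le_rpow (by linarith) hβ1.le
    have h2 : Real.log n ≤ (n:ℝ)^(β-1) / (β-1) :=
      Real.log_le_rpow_div (Nat.cast_nonneg n) hβ1
    have h3 : 1 + Real.log n ≤ (n:ℝ)^(β-1) * (1 + 1/(β-1)) := by
      rw [mul_add, mul_one, mul_one_div]
      linarith
    have h4 : (2/(n:ℝ))^β = 2^β / (n:ℝ)^β := Real.div_rpow (by norm_num) (Nat.cast_nonneg n) β
    have h5 : (n:ℝ)^(β-1) = (n:ℝ)^β / n := by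
      rw [Real.rpow_sub hN0, Real.rpow_one]
    have h6 : (0:ℝ) < (n:ℝ)^β := Real.rpow_pos_of_pos hN0 β
    have h7 : (0:ℝ) < (2:ℝ)^β := Real.rpow_pos_of_pos (by norm_num) β
    calc (2/(n:ℝ))^β * (2 * (1 + Real.log n))
        ≤ (2^β / (n:ℝ)^β) * (2 * ((n:ℝ)^(β-1) * (1 + 1/(β-1)))) := by
          rw [h4]
          exact mul_le_mul_of_nonneg_left
            (mul_le_mul_of_nonneg_left h3 (by norm_num)) (by positivity)
      _ = (2^β * 2 * (1 + 1/(β-1))) / n := by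
          rw [h5]; field_simp
  -- assemble
  have hsplit := Summable.sum_add_tsum_nat_add (2*n) hfs
  calc ∑' j : ℕ, f j = ∑ j ∈ range (2*n), f j + ∑' k : ℕ, f (k + 2*n) := hsplit.symm
    _ ≤ (2/(n:ℝ) * Z + (2/(n:ℝ))^β * (2 * (1 + Real.log n))) + Z/n :=
        add_le_add hnear htail
    _ ≤ (2/(n:ℝ) * Z + (2^β * 2 * (1 + 1/(β-1))) / n) + Z/n := by linarith
    _ = (3*Z + 2^β * 2 * (1 + 1/(β-1))) / n := by field_simp; ring
end

section
/- For z on the boundary of the square D_n (with n ≥ 2), the diagonal operator K on ℓ²(ℕ) defined by K e_j = (z − (2j+1))^{−1/2} e_j satisfies the Schatten-4 norm bound ‖K‖_4^4 = Σ_{j=0}^∞ 1/|z − (2j+1)|² < 20; in particular ‖K‖_4 ≤ 11/5. -/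
/-!
On the boundary of `D_n` we have `|Re z - (2n+1)| ≤ 1/2` and `|z - (2n+1)| ≥ 1/2`; together these
give `|z - (2j+1)|² ≥ (1 + (j-n)²)/4` for every `j`. Reindexing by `k = j - n ∈ ℤ`, the sum is
at most `4 ∑_{k ∈ ℤ} 1/(1+k²) ≤ 4 (1 + π²/3) < 20`, and `20 < (11/5)⁴`.
-/

open Real

lemma Complex.sq_norm_sub_ofReal (z : ℂ) (x : ℝ) : ‖z - x‖ ^ 2 = (z.re - x) ^ 2 + z.im ^ 2 := by
  rw [Complex.sq_norm, Complex.normSq_apply]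
  simp only [Complex.sub_re, Complex.sub_im, Complex.ofReal_re, Complex.ofReal_im, sub_zero]
  ring

lemma abs_le_and_quarter_le_of_boundary {a y : ℝ}
    (h : (|a| = 1 / 2 ∧ |y| ≤ 1 / 2) ∨ (|a| ≤ 1 / 2 ∧ |y| = 1 / 2)) :
    |a| ≤ 1 / 2 ∧ 1 / 4 ≤ a ^ 2 + y ^ 2 := by
  rcases h with ⟨ha, -⟩ | ⟨ha, hy⟩
  · exact ⟨ha.le, by nlinarith [sq_abs a, sq_nonneg y]⟩
  · exact ⟨ha, by nlinarith [sq_abs y, sq_nonneg a]⟩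

lemma one_add_sq_div_four_le {a y : ℝ} (d : ℤ) (ha : |a| ≤ 1 / 2) (hay : 1 / 4 ≤ a ^ 2 + y ^ 2) :
    (1 + (d : ℝ) ^ 2) / 4 ≤ (a - 2 * d) ^ 2 + y ^ 2 := by
  rcases eq_or_ne d 0 with rfl | hd
  · simpa using hay
  have hd1 : (1 : ℝ) ≤ |(d : ℝ)| := by exact_mod_cast Int.one_le_abs hd
  have h32 : 3 / 2 * |(d : ℝ)| ≤ |a - 2 * d| := by
    have := abs_sub_abs_le_abs_sub (2 * (d : ℝ)) a
    rw [abs_sub_comm, abs_mul, abs_two] at this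
    linarith
  nlinarith [sq_abs (a - 2 * d), sq_abs (d : ℝ), sq_nonneg y]

lemma one_div_norm_sub_odd_sq_le {n : ℕ} {z : ℂ} (hre : |z.re - (2 * n + 1)| ≤ 1 / 2)
    (hdisc : 1 / 4 ≤ (z.re - (2 * n + 1)) ^ 2 + z.im ^ 2) (j : ℕ) :
    1 / ‖z - (2 * (j : ℂ) + 1)‖ ^ 2 ≤ 4 * (1 / (1 + ((j - n : ℤ) : ℝ) ^ 2)) := by
  have h := one_add_sq_div_four_le (j - n) hre hdisc
  have hnorm : ‖z - (2 * (j : ℂ) + 1)‖ ^ 2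
      = (z.re - (2 * n + 1) - 2 * ((j - n : ℤ) : ℝ)) ^ 2 + z.im ^ 2 := by
    rw [show (2 * (j : ℂ) + 1) = ((2 * j + 1 : ℝ) : ℂ) by push_cast; ring,
      Complex.sq_norm_sub_ofReal]
    push_cast; ring
  calc 1 / ‖z - (2 * (j : ℂ) + 1)‖ ^ 2 ≤ 1 / ((1 + ((j - n : ℤ) : ℝ) ^ 2) / 4) := by
        rw [hnorm]; exact one_div_le_one_div_of_le (by positivity) h
    _ = 4 * (1 / (1 + ((j - n : ℤ) : ℝ) ^ 2)) := by field_simp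

lemma hasSum_one_div_succ_sq : HasSum (fun n : ℕ ↦ 1 / ((n : ℝ) + 1) ^ 2) (π ^ 2 / 6) := by
  simpa using (hasSum_nat_add_iff' 1).mpr hasSum_zeta_two

lemma one_div_one_add_succ_sq_le (n : ℕ) : 1 / (1 + ((n : ℝ) + 1) ^ 2) ≤ 1 / ((n : ℝ) + 1) ^ 2 := by
  gcongr; simp

lemma summable_one_div_one_add_succ_sq : Summable fun n : ℕ ↦ 1 / (1 + ((n : ℝ) + 1) ^ 2) :=
  hasSum_one_div_succ_sq.summable.of_nonneg_of_le (fun _ ↦ by positivity) one_div_one_add_succ_sq_le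

lemma tsum_one_div_one_add_succ_sq_le : ∑' n : ℕ, 1 / (1 + ((n : ℝ) + 1) ^ 2) ≤ π ^ 2 / 6 :=
  hasSum_le one_div_one_add_succ_sq_le summable_one_div_one_add_succ_sq.hasSum
    hasSum_one_div_succ_sq

lemma hasSum_one_div_one_add_sq_int :
    HasSum (fun k : ℤ ↦ 1 / (1 + (k : ℝ) ^ 2))
      (1 + 2 * ∑' n : ℕ, 1 / (1 + ((n : ℝ) + 1) ^ 2)) := by
  set s := ∑' n : ℕ, 1 / (1 + ((n : ℝ) + 1) ^ 2)
  have h : HasSum _ s := summable_one_div_one_add_succ_sq.hasSum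
  have h₁ : HasSum (fun n : ℕ ↦ 1 / (1 + ((n + 1 : ℤ) : ℝ) ^ 2)) s := by
    simpa only [Int.cast_add, Int.cast_natCast, Int.cast_one] using h
  have h₂ : HasSum (fun n : ℕ ↦ 1 / (1 + ((-(n + 1) : ℤ) : ℝ) ^ 2)) s := by
    simpa only [Int.cast_neg, Int.cast_add, Int.cast_natCast, Int.cast_one, neg_sq] using h
  convert HasSum.of_add_one_of_neg_add_one (f := fun k : ℤ ↦ 1 / (1 + (k : ℝ) ^ 2)) h₁ h₂ using 1
  norm_num
  ring

lemma tsum_one_div_one_add_sq_int_le : ∑' k : ℤ, 1 / (1 + (k : ℝ) ^ 2) ≤ 1 + π ^ 2 / 3 := by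
  rw [hasSum_one_div_one_add_sq_int.tsum_eq]
  linarith [tsum_one_div_one_add_succ_sq_le]

lemma tsum_one_div_norm_sub_odd_sq_le {n : ℕ} {z : ℂ} (hre : |z.re - (2 * n + 1)| ≤ 1 / 2)
    (hdisc : 1 / 4 ≤ (z.re - (2 * n + 1)) ^ 2 + z.im ^ 2) :
    ∑' j : ℕ, 1 / ‖z - (2 * (j : ℂ) + 1)‖ ^ 2 ≤ 4 * (1 + π ^ 2 / 3) := by
  have hbound := one_div_norm_sub_odd_sq_le hre hdisc
  have hinj : Function.Injective fun j : ℕ ↦ (j - n : ℤ) := fun i j h ↦ by simpa using h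
  have hg := hasSum_one_div_one_add_sq_int.summable
  have hgj := (hg.comp_injective hinj).mul_left 4
  calc ∑' j : ℕ, 1 / ‖z - (2 * (j : ℂ) + 1)‖ ^ 2
      ≤ ∑' j : ℕ, 4 * (1 / (1 + ((j - n : ℤ) : ℝ) ^ 2)) :=
        (hgj.of_nonneg_of_le (fun _ ↦ by positivity) hbound).tsum_le_tsum hbound hgj
    _ ≤ 4 * ∑' k : ℤ, 1 / (1 + (k : ℝ) ^ 2) := by
        rw [tsum_mul_left]
        gcongr
        exact tsum_comp_le_tsum_of_inj hg (fun _ ↦ by positivity) hinj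
    _ ≤ 4 * (1 + π ^ 2 / 3) := by gcongr; exact tsum_one_div_one_add_sq_int_le

theorem stmt4_general (n : ℕ) (z : ℂ)
    (hz : (|z.re - (2*(n:ℝ)+1)| = 1/2 ∧ |z.im| ≤ 1/2) ∨
          (|z.re - (2*(n:ℝ)+1)| ≤ 1/2 ∧ |z.im| = 1/2)) :
    (∑' j : ℕ, 1 / ‖z - (2*(j:ℂ)+1)‖ ^ 2) < 20 ∧
    (∑' j : ℕ, 1 / ‖z - (2*(j:ℂ)+1)‖ ^ 2) ^ ((1:ℝ)/4) ≤ 11/5 := by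
  obtain ⟨hre, hdisc⟩ := abs_le_and_quarter_le_of_boundary hz
  have hle := tsum_one_div_norm_sub_odd_sq_le hre hdisc
  have hlt : ∑' j : ℕ, 1 / ‖z - (2 * (j : ℂ) + 1)‖ ^ 2 < 20 := by
    nlinarith [pi_lt_d2, pi_pos]
  refine ⟨hlt, ?_⟩
  rw [one_div,
    rpow_inv_le_iff_of_pos (tsum_nonneg fun _ ↦ by positivity) (by norm_num) (by norm_num)]
  exact hlt.le.trans (by norm_num)

/-- Schatten-4 norm bound Σ_j 1/|z−(2j+1)|² < 20, hence ‖K‖₄ ≤ 11/5. -/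
theorem stmt4 (n : ℕ) (hn : 2 ≤ n) (z : ℂ)
    (hz : (|z.re - (2*(n:ℝ)+1)| = 1/2 ∧ |z.im| ≤ 1/2) ∨
          (|z.re - (2*(n:ℝ)+1)| ≤ 1/2 ∧ |z.im| = 1/2)) :
    (∑' j : ℕ, 1 / ‖z - (2*(j:ℂ)+1)‖ ^ 2) < 20 ∧
    (∑' j : ℕ, 1 / ‖z - (2*(j:ℂ)+1)‖ ^ 2) ^ ((1:ℝ)/4) ≤ 11/5 :=
  stmt4_general n z hz
end

section
/- Let (α_k) and (α'_k) be real sequences with |α_k|, |α'_k| ≤ C k^{−1/4} and |α'_k − α_k| ≤ C k^{−3/4} for k ≥ 1. Then for n ≥ 2, the sums A(n) = Σ_{k≥1, n−k odd} α_k²/(n−k) and A'(n) = Σ_{k≥1, n−k odd} α'_k²/(n−k) satisfy |A(n)|, |A'(n)| ≤ C' log(en)/√n and |A(n) − A'(n)| ≤ C' log(en)/n for a constant C' depending only on C. -/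
/-!
Put `w k = k ^ (-s) / |n - k|` with `0 < s ≤ 1`. For `k ≤ 2n`,
`w k ≤ 2 n ^ (-s) (1 / k + 1 / |n - k|)` (split at `k = n / 2`), and the two harmonic sums give
`O(n ^ (-s) log n)`. For `k > 2n`, `w k ≤ 2 k ^ (-s - 1)`, and by Bernoulli's inequality
`s x ^ (-s - 1) ≤ (x - 1) ^ (-s) - x ^ (-s)`, so this tail telescopes to at most `2 n ^ (-s) / s`.
A sequence with `|b k| ≤ D k ^ (-s)` thus has `|∑ b k / (n - k)| ≤ D ∑ w k = O(D n ^ (-s) log(en))`.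
This is applied with `s = 1/2` to `α_k²`, and with `s = 1` to
`α_k² - α'_k² = (α_k - α'_k)(α_k + α'_k)`, which is at most `2 C² / k`.
-/

open Finset Real

section

variable {s : ℝ}

lemma mul_rpow_neg_sub_one_le_sub (hs0 : 0 ≤ s) (hs1 : s ≤ 1) {x : ℝ} (hx : 1 < x) :
    s * x ^ (-s - 1) ≤ (x - 1) ^ (-s) - x ^ (-s) := by
  have hx0 : 0 < x := by linarith
  have hx1 : 0 < 1 - x⁻¹ := by linarith [inv_lt_one_of_one_lt₀ hx]
  have hu : (1 - x⁻¹) ^ s ≤ 1 - s * x⁻¹ := by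
    have := rpow_one_add_le_one_add_mul_self (s := -x⁻¹) (by linarith) hs0 hs1
    rwa [← sub_eq_add_neg, mul_neg, ← sub_eq_add_neg] at this
  set u := (1 - x⁻¹) ^ s
  have hu0 : 0 < u := rpow_pos_of_pos hx1 s
  have hsplit : (x - 1) ^ (-s) = x ^ (-s) * u⁻¹ := by
    rw [show x - 1 = x * (1 - x⁻¹) by field_simp, mul_rpow hx0.le hx1.le, rpow_neg hx1.le]
  -- Bernoulli gave `u ≤ 1 - a` with `a = s / x`, hence `u⁻¹ ≥ (1 - a)⁻¹ ≥ 1 + a`.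
  have key : s * x⁻¹ ≤ u⁻¹ - 1 := by
    have := mul_inv_cancel₀ hu0.ne'
    nlinarith [inv_pos.mpr hu0, mul_nonneg hs0 (inv_pos.mpr hx0).le]
  rw [rpow_sub_one hx0.ne', hsplit]
  have := rpow_pos_of_pos hx0 (-s)
  calc s * (x ^ (-s) / x) = x ^ (-s) * (s * x⁻¹) := by ring
    _ ≤ x ^ (-s) * (u⁻¹ - 1) := by gcongr
    _ = _ := by ring

lemma sum_range_natCast_rpow_neg_sub_one_le (hs0 : 0 < s) (hs1 : s ≤ 1) {N : ℕ} (hN : 0 < N)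
    (m : ℕ) : ∑ j ∈ range m, ((N + 1 + j : ℕ) : ℝ) ^ (-s - 1) ≤ (N : ℝ) ^ (-s) / s := by
  rw [le_div_iff₀ hs0, sum_mul]
  calc ∑ j ∈ range m, ((N + 1 + j : ℕ) : ℝ) ^ (-s - 1) * s
      ≤ ∑ j ∈ range m, (((N + j : ℕ) : ℝ) ^ (-s) - ((N + (j + 1) : ℕ) : ℝ) ^ (-s)) := by
        refine sum_le_sum fun j _ => ?_
        have h := mul_rpow_neg_sub_one_le_sub hs0.le hs1
          (x := ((N + 1 + j : ℕ) : ℝ)) (by push_cast; linarith [(Nat.one_le_cast (α := ℝ)).2 hN])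
        rw [show ((N + 1 + j : ℕ) : ℝ) - 1 = ((N + j : ℕ) : ℝ) by push_cast; ring] at h
        rw [show N + (j + 1) = N + 1 + j by ring]
        linarith
    _ = (N : ℝ) ^ (-s) - ((N + m : ℕ) : ℝ) ^ (-s) := by
        simpa using sum_range_sub' (fun j => ((N + j : ℕ) : ℝ) ^ (-s)) m
    _ ≤ (N : ℝ) ^ (-s) := sub_le_self _ (by positivity)

lemma sum_range_succ_natCast_inv_le (m : ℕ) : ∑ k ∈ range (m + 1), (k : ℝ)⁻¹ ≤ 1 + log m := by
  have h := harmonic_le_one_add_log m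
  simp only [harmonic, Rat.cast_sum, Rat.cast_inv, Rat.cast_natCast] at h
  simpa [sum_range_succ'] using h

lemma sum_range_inv_abs_sub_le (n : ℕ) :
    ∑ k ∈ range (2 * n + 1), |(n : ℝ) - k|⁻¹ ≤ 2 * (1 + log n) := by
  rw [show 2 * n + 1 = (n + 1) + n by ring, sum_range_add]
  have hleft : ∑ k ∈ range (n + 1), |(n : ℝ) - k|⁻¹ = ∑ k ∈ range (n + 1), (k : ℝ)⁻¹ := by
    rw [← sum_range_reflect]
    refine sum_congr rfl fun k hk => ?_
    have hk : k ≤ n := Nat.lt_succ_iff.mp (mem_range.mp hk)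
    rw [show n + 1 - 1 - k = n - k by omega, Nat.cast_sub hk, sub_sub_cancel,
      abs_of_nonneg (Nat.cast_nonneg k)]
  have hright : ∑ j ∈ range n, |(n : ℝ) - (n + 1 + j : ℕ)|⁻¹ = ∑ k ∈ range (n + 1), (k : ℝ)⁻¹ := by
    rw [sum_range_succ']
    simp only [Nat.cast_zero, inv_zero, add_zero]
    refine sum_congr rfl fun j _ => ?_
    push_cast
    rw [show (n : ℝ) - (n + 1 + j) = -(j + 1) by ring, abs_neg, abs_of_pos (by positivity)]
  rw [hleft, hright]
  linarith [sum_range_succ_natCast_inv_le n]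

lemma rpow_neg_div_abs_sub_le (hs0 : 0 < s) (hs1 : s ≤ 1) {x y : ℝ} (hx : 0 ≤ x) (hy : 0 < y) :
    x ^ (-s) / |y - x| ≤ 2 * y ^ (-s) * (x⁻¹ + |y - x|⁻¹) := by
  rcases hx.eq_or_lt with rfl | hx0
  · rw [zero_rpow (neg_ne_zero.mpr hs0.ne'), zero_div]; positivity
  by_cases hxy : 2 * x ≤ y
  · have hd : y / 2 ≤ |y - x| := by rw [abs_of_nonneg (by linarith)]; linarith
    have hpow : x ^ (-s) * x ≤ y ^ (-s) * y := by
      rw [← rpow_add_one hx0.ne', ← rpow_add_one hy.ne']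
      exact rpow_le_rpow hx (by linarith) (by linarith)
    calc x ^ (-s) / |y - x| ≤ x ^ (-s) / (y / 2) := by gcongr
      _ = 2 * (x ^ (-s) * x) / y * x⁻¹ := by field_simp
      _ ≤ 2 * (y ^ (-s) * y) / y * x⁻¹ := by gcongr
      _ = 2 * y ^ (-s) * x⁻¹ := by field_simp
      _ ≤ 2 * y ^ (-s) * (x⁻¹ + |y - x|⁻¹) := by
        gcongr; exact le_add_of_nonneg_right (by positivity)
  · have hpow : x ^ (-s) ≤ 2 * y ^ (-s) :=
      calc x ^ (-s) ≤ (y / 2) ^ (-s) :=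
          rpow_le_rpow_of_nonpos (by positivity) (by linarith) (by linarith)
        _ = 2 ^ s * y ^ (-s) := by
          rw [div_eq_mul_inv, mul_rpow hy.le (by norm_num), inv_rpow (by norm_num),
            ← rpow_neg (by norm_num), neg_neg, mul_comm]
        _ ≤ 2 * y ^ (-s) := by
          gcongr
          simpa using rpow_le_rpow_of_exponent_le (x := 2) (by norm_num) hs1
    calc x ^ (-s) / |y - x| = x ^ (-s) * |y - x|⁻¹ := div_eq_mul_inv _ _
      _ ≤ 2 * y ^ (-s) * |y - x|⁻¹ := by gcongr
      _ ≤ 2 * y ^ (-s) * (x⁻¹ + |y - x|⁻¹) := by gcongr; exact le_add_of_nonneg_left (by positivity)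

lemma rpow_neg_div_abs_sub_le_of_two_mul_le {x y : ℝ} (hy : 0 < y) (hxy : 2 * y ≤ x) :
    x ^ (-s) / |y - x| ≤ 2 * x ^ (-s - 1) := by
  have hx0 : 0 < x := by linarith
  have hd : x / 2 ≤ |y - x| := by rw [abs_sub_comm, abs_of_nonneg (by linarith)]; linarith
  calc x ^ (-s) / |y - x| ≤ x ^ (-s) / (x / 2) := by gcongr
    _ = 2 * x ^ (-s - 1) := by rw [rpow_sub_one hx0.ne']; field_simp

/-- Thanks to `0⁻¹ = 0` and `0 ^ (-s) = 0` (for `s ≠ 0`), this vanishes at `k = n` and `k = 0`. -/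
noncomputable def hilbertWeight (s : ℝ) (n k : ℕ) : ℝ := (k : ℝ) ^ (-s) / |(n : ℝ) - k|

lemma hilbertWeight_nonneg (s : ℝ) (n k : ℕ) : 0 ≤ hilbertWeight s n k := by
  unfold hilbertWeight; positivity

lemma sum_range_hilbertWeight_le (hs0 : 0 < s) (hs1 : s ≤ 1) {n : ℕ} (hn : 0 < n) (m : ℕ) :
    ∑ k ∈ range m, hilbertWeight s n k ≤ (8 + 2 / s) * (n : ℝ) ^ (-s) * (1 + log n) := by
  have hn0 : (0 : ℝ) < n := Nat.cast_pos.mpr hn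
  have hlog := log_natCast_nonneg n
  have hnear : ∑ k ∈ range (2 * n + 1), hilbertWeight s n k ≤ 8 * (n : ℝ) ^ (-s) * (1 + log n) := by
    have hharm : ∑ k ∈ range (2 * n + 1), (k : ℝ)⁻¹ ≤ 1 + log n + 1 := by
      have h := sum_range_succ_natCast_inv_le (2 * n)
      rw [Nat.cast_mul, Nat.cast_two, log_mul two_ne_zero hn0.ne'] at h
      linarith [log_two_lt_d9]
    calc ∑ k ∈ range (2 * n + 1), hilbertWeight s n k
        ≤ ∑ k ∈ range (2 * n + 1), 2 * (n : ℝ) ^ (-s) * ((k : ℝ)⁻¹ + |(n : ℝ) - k|⁻¹) :=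
          sum_le_sum fun k _ => rpow_neg_div_abs_sub_le hs0 hs1 k.cast_nonneg hn0
      _ = 2 * (n : ℝ) ^ (-s) *
            (∑ k ∈ range (2 * n + 1), (k : ℝ)⁻¹ + ∑ k ∈ range (2 * n + 1), |(n : ℝ) - k|⁻¹) := by
          rw [← sum_add_distrib, mul_sum]
      _ ≤ 2 * (n : ℝ) ^ (-s) * ((1 + log n + 1) + 2 * (1 + log n)) := by
          gcongr
          exact sum_range_inv_abs_sub_le n
      _ ≤ 8 * (n : ℝ) ^ (-s) * (1 + log n) := by
          have := rpow_pos_of_pos hn0 (-s)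
          nlinarith
  have hfar : ∑ j ∈ range m, hilbertWeight s n (2 * n + 1 + j) ≤ 2 / s * (n : ℝ) ^ (-s) := by
    calc ∑ j ∈ range m, hilbertWeight s n (2 * n + 1 + j)
        ≤ ∑ j ∈ range m, 2 * ((2 * n + 1 + j : ℕ) : ℝ) ^ (-s - 1) :=
          sum_le_sum fun j _ => rpow_neg_div_abs_sub_le_of_two_mul_le (x := (2 * n + 1 + j : ℕ)) hn0
            (by push_cast; linarith)
      _ ≤ 2 * (((2 * n : ℕ) : ℝ) ^ (-s) / s) := by
          rw [← mul_sum]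
          gcongr
          exact sum_range_natCast_rpow_neg_sub_one_le hs0 hs1 (by omega) m
      _ ≤ 2 * ((n : ℝ) ^ (-s) / s) := by
          gcongr 2 * (?_ / s)
          exact rpow_le_rpow_of_nonpos hn0 (by push_cast; linarith) (by linarith)
      _ = 2 / s * (n : ℝ) ^ (-s) := by ring
  calc ∑ k ∈ range m, hilbertWeight s n k
      ≤ ∑ k ∈ range (2 * n + 1 + m), hilbertWeight s n k :=
        sum_le_sum_of_subset_of_nonneg (range_mono (by omega))
          fun k _ _ => hilbertWeight_nonneg s n k
    _ = ∑ k ∈ range (2 * n + 1), hilbertWeight s n k +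
          ∑ j ∈ range m, hilbertWeight s n (2 * n + 1 + j) := sum_range_add _ _ _
    _ ≤ 8 * (n : ℝ) ^ (-s) * (1 + log n) + 2 / s * (n : ℝ) ^ (-s) := add_le_add hnear hfar
    _ ≤ (8 + 2 / s) * (n : ℝ) ^ (-s) * (1 + log n) := by
        have : 0 ≤ 2 / s * (n : ℝ) ^ (-s) := by positivity
        nlinarith

lemma summable_hilbertWeight (hs0 : 0 < s) (hs1 : s ≤ 1) {n : ℕ} (hn : 0 < n) :
    Summable (hilbertWeight s n) :=
  summable_of_sum_range_le (hilbertWeight_nonneg s n) (sum_range_hilbertWeight_le hs0 hs1 hn)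

lemma tsum_hilbertWeight_le (hs0 : 0 < s) (hs1 : s ≤ 1) {n : ℕ} (hn : 0 < n) :
    ∑' k, hilbertWeight s n k ≤ (8 + 2 / s) * (n : ℝ) ^ (-s) * (1 + log n) :=
  Real.tsum_le_of_sum_range_le (hilbertWeight_nonneg s n) (sum_range_hilbertWeight_le hs0 hs1 hn)

end

noncomputable def oddHilbertTerm (b : ℕ → ℝ) (n k : ℕ) : ℝ :=
  if 1 ≤ k ∧ Odd ((n : ℤ) - (k : ℤ)) then b k / ((n : ℝ) - k) else 0

noncomputable def oddHilbert (b : ℕ → ℝ) (n : ℕ) : ℝ := ∑' k, oddHilbertTerm b n k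

lemma oddHilbertTerm_sub (b c : ℕ → ℝ) (n k : ℕ) :
    oddHilbertTerm (b - c) n k = oddHilbertTerm b n k - oddHilbertTerm c n k := by
  unfold oddHilbertTerm; split_ifs <;> simp [sub_div]

lemma oddHilbert_sub {b c : ℕ → ℝ} {n : ℕ} (hb : Summable (oddHilbertTerm b n))
    (hc : Summable (oddHilbertTerm c n)) :
    oddHilbert (b - c) n = oddHilbert b n - oddHilbert c n := by
  simp only [oddHilbert, oddHilbertTerm_sub, hb.tsum_sub hc]

lemma abs_mul_le_mul_rpow_add {x y A B t p q : ℝ} (ht : 0 < t) (hx : |x| ≤ A * t ^ p)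
    (hy : |y| ≤ B * t ^ q) : |x * y| ≤ A * B * t ^ (p + q) := by
  rw [abs_mul, rpow_add ht]
  calc |x| * |y| ≤ (A * t ^ p) * (B * t ^ q) :=
        mul_le_mul hx hy (abs_nonneg _) ((abs_nonneg _).trans hx)
    _ = A * B * (t ^ p * t ^ q) := by ring

lemma abs_sq_le_sq_mul_rpow {x C t p : ℝ} (ht : 0 < t) (hx : |x| ≤ C * t ^ p) :
    |x ^ 2| ≤ C ^ 2 * t ^ (p + p) := by
  simpa only [sq] using abs_mul_le_mul_rpow_add ht hx hx

lemma abs_sq_sub_sq_le {x y C t p q : ℝ} (ht : 0 < t) (hx : |x| ≤ C * t ^ p)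
    (hy : |y| ≤ C * t ^ p) (hxy : |y - x| ≤ C * t ^ q) :
    |x ^ 2 - y ^ 2| ≤ 2 * C ^ 2 * t ^ (q + p) := by
  have hsum : |x + y| ≤ 2 * C * t ^ p := by linarith [abs_add_le x y]
  calc |x ^ 2 - y ^ 2| = |(x - y) * (x + y)| := by ring_nf
    _ ≤ C * (2 * C) * t ^ (q + p) := abs_mul_le_mul_rpow_add ht (abs_sub_comm x y ▸ hxy) hsum
    _ = 2 * C ^ 2 * t ^ (q + p) := by ring

section

variable {b : ℕ → ℝ} {D s : ℝ}

lemma abs_oddHilbertTerm_le (hb : ∀ k, 1 ≤ k → |b k| ≤ D * (k : ℝ) ^ (-s)) (n k : ℕ) :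
    |oddHilbertTerm b n k| ≤ D * hilbertWeight s n k := by
  have hD : 0 ≤ D := by simpa using (abs_nonneg _).trans (hb 1 le_rfl)
  unfold oddHilbertTerm hilbertWeight
  split_ifs with h
  · rw [abs_div, mul_div_assoc']
    gcongr
    exact hb k h.1
  · rw [abs_zero]; positivity

lemma summable_oddHilbertTerm (hs0 : 0 < s) (hs1 : s ≤ 1)
    (hb : ∀ k, 1 ≤ k → |b k| ≤ D * (k : ℝ) ^ (-s)) {n : ℕ} (hn : 0 < n) :
    Summable (oddHilbertTerm b n) :=
  ((summable_hilbertWeight hs0 hs1 hn).mul_left D).of_norm_bounded (abs_oddHilbertTerm_le hb n)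

theorem abs_oddHilbert_le (hs0 : 0 < s) (hs1 : s ≤ 1)
    (hb : ∀ k, 1 ≤ k → |b k| ≤ D * (k : ℝ) ^ (-s)) {n : ℕ} (hn : 0 < n) :
    |oddHilbert b n| ≤ (8 + 2 / s) * D * (1 + log n) / (n : ℝ) ^ s := by
  have hD : 0 ≤ D := by simpa using (abs_nonneg _).trans (hb 1 le_rfl)
  calc |oddHilbert b n| ≤ D * ∑' k, hilbertWeight s n k :=
        tsum_of_norm_bounded (f := oddHilbertTerm b n)
          ((summable_hilbertWeight hs0 hs1 hn).hasSum.mul_left D) (abs_oddHilbertTerm_le hb n)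
    _ ≤ D * ((8 + 2 / s) * (n : ℝ) ^ (-s) * (1 + log n)) := by
        gcongr; exact tsum_hilbertWeight_le hs0 hs1 hn
    _ = (8 + 2 / s) * D * (1 + log n) / (n : ℝ) ^ s := by
        rw [rpow_neg (Nat.cast_nonneg n)]; ring

end

theorem stmt5_general (C : ℝ) :
    ∃ C' : ℝ, ∀ a a' : ℕ → ℝ,
      (∀ k : ℕ, 1 ≤ k →
        |a k| ≤ C * (k:ℝ) ^ (-(1:ℝ)/4) ∧ |a' k| ≤ C * (k:ℝ) ^ (-(1:ℝ)/4) ∧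
        |a' k - a k| ≤ C * (k:ℝ) ^ (-(3:ℝ)/4)) →
      ∀ n : ℕ, 2 ≤ n →
        |∑' k : ℕ, (if 1 ≤ k ∧ Odd ((n:ℤ) - (k:ℤ)) then a k ^ 2 / ((n:ℝ) - k) else 0)| ≤
            C' * Real.log (Real.exp 1 * n) / Real.sqrt n ∧
        |∑' k : ℕ, (if 1 ≤ k ∧ Odd ((n:ℤ) - (k:ℤ)) then a' k ^ 2 / ((n:ℝ) - k) else 0)| ≤
            C' * Real.log (Real.exp 1 * n) / Real.sqrt n ∧
        |(∑' k : ℕ, (if 1 ≤ k ∧ Odd ((n:ℤ) - (k:ℤ)) then a k ^ 2 / ((n:ℝ) - k) else 0)) -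
         (∑' k : ℕ, (if 1 ≤ k ∧ Odd ((n:ℤ) - (k:ℤ)) then a' k ^ 2 / ((n:ℝ) - k) else 0))| ≤
            C' * Real.log (Real.exp 1 * n) / n := by
  refine ⟨20 * C ^ 2, fun a a' ha n hn => ?_⟩
  have hn0 : 0 < n := by omega
  have hsq : ∀ c : ℕ → ℝ, (∀ k, 1 ≤ k → |c k| ≤ C * (k : ℝ) ^ (-(1 : ℝ) / 4)) →
      ∀ k, 1 ≤ k → |c k ^ 2| ≤ C ^ 2 * (k : ℝ) ^ (-(1 / 2 : ℝ)) := fun c hc k hk => by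
    convert abs_sq_le_sq_mul_rpow (by positivity) (hc k hk) using 3; norm_num
  have hdiff : ∀ k, 1 ≤ k → |a k ^ 2 - a' k ^ 2| ≤ 2 * C ^ 2 * (k : ℝ) ^ (-(1 : ℝ)) := by
    intro k hk
    obtain ⟨h, h', hd⟩ := ha k hk
    convert abs_sq_sub_sq_le (by positivity) h h' hd using 3; norm_num
  have ha2 := hsq a fun k hk => (ha k hk).1
  have ha'2 := hsq a' fun k hk => (ha k hk).2.1
  have hsum := summable_oddHilbertTerm (by norm_num) (by norm_num) ha2 hn0
  have hsum' := summable_oddHilbertTerm (by norm_num) (by norm_num) ha'2 hn0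
  have hA := abs_oddHilbert_le (by norm_num) (by norm_num) ha2 hn0
  have hA' := abs_oddHilbert_le (by norm_num) (by norm_num) ha'2 hn0
  have hAA' := abs_oddHilbert_le (b := (fun k => a k ^ 2) - fun k => a' k ^ 2) (by norm_num) le_rfl
    hdiff hn0
  rw [oddHilbert_sub hsum hsum', rpow_one] at hAA'
  rw [← sqrt_eq_rpow] at hA hA'
  rw [log_mul (exp_ne_zero 1) (by positivity), log_exp]
  refine ⟨hA.trans ?_, hA'.trans ?_, hAA'.trans_eq (by ring)⟩ <;> gcongr <;> norm_num

/-- transforms A(n) = Σ_{k≥1, n−k odd} α_k²/(n−k) and A'(n) are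
O(log(en)/√n) and their difference is O(log(en)/n). -/
theorem stmt5 (C : ℝ) (hC : 0 < C) :
    ∃ C' : ℝ, ∀ a a' : ℕ → ℝ,
      (∀ k : ℕ, 1 ≤ k →
        |a k| ≤ C * (k:ℝ) ^ (-(1:ℝ)/4) ∧ |a' k| ≤ C * (k:ℝ) ^ (-(1:ℝ)/4) ∧
        |a' k - a k| ≤ C * (k:ℝ) ^ (-(3:ℝ)/4)) →
      ∀ n : ℕ, 2 ≤ n →
        |∑' k : ℕ, (if 1 ≤ k ∧ Odd ((n:ℤ) - (k:ℤ)) then a k ^ 2 / ((n:ℝ) - k) else 0)| ≤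
            C' * Real.log (Real.exp 1 * n) / Real.sqrt n ∧
        |∑' k : ℕ, (if 1 ≤ k ∧ Odd ((n:ℤ) - (k:ℤ)) then a' k ^ 2 / ((n:ℝ) - k) else 0)| ≤
            C' * Real.log (Real.exp 1 * n) / Real.sqrt n ∧
        |(∑' k : ℕ, (if 1 ≤ k ∧ Odd ((n:ℤ) - (k:ℤ)) then a k ^ 2 / ((n:ℝ) - k) else 0)) -
         (∑' k : ℕ, (if 1 ≤ k ∧ Odd ((n:ℤ) - (k:ℤ)) then a' k ^ 2 / ((n:ℝ) - k) else 0))| ≤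
            C' * Real.log (Real.exp 1 * n) / n :=
  stmt5_general C
end

section
/- For every integer n ≥ 8, the sum ξ(n) = Σ_{k≥1, n−k odd} (1/√k)·(1/(n−k)) satisfies |ξ(n)| ≤ C/n for an absolute constant C. -/
/-!
Writing `k = n + j`, the terms of `ξ(n)` are `-g(j)` for the odd `j > -n`, where
`g(x) = 1 / (x √(n + x))` has the primitive `Ψ(x) = (log |x| - 2 log (√(n + x) + √n)) / √n`,
which vanishes at `+∞`. Pairing `j` with `-j` turns the part `|j| < n` into a sum of
`g(x) + g(-x)`, which is antitone on `(0, n)`, while `g` is antitone on `(0, ∞)`. Over a grid of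
step `2` such sums are sandwiched between increments of the primitive, so up to one boundary term
`2 ξ(n) ≈ Ψ(-J) + (Ψ(1) - Ψ(-1))`, where `J` is the largest odd number below `n`: the values
`Ψ(J)` coming from the two parts cancel. Finally `Ψ(-J)`, `Ψ(1) - Ψ(-1)` and the boundary terms
are all `O(1/n)`.
-/

open Real Set Filter Topology Finset

section GridComparison

variable {f Φ : ℝ → ℝ}

theorem AntitoneOn.sub_mem_Icc_of_hasDerivAt {a b : ℝ} (hab : a ≤ b)
    (hΦ : ∀ x ∈ Icc a b, HasDerivAt Φ (f x) x) (hf : AntitoneOn f (Icc a b)) :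
    Φ b - Φ a ∈ Icc (f b * (b - a)) (f a * (b - a)) := by
  rcases hab.eq_or_lt with rfl | hlt
  · simp
  obtain ⟨c, hc, hslope⟩ := exists_hasDerivAt_eq_slope Φ f hlt
    (fun x hx => (hΦ x hx).continuousAt.continuousWithinAt)
    (fun x hx => hΦ x (Ioo_subset_Icc_self hx))
  have hc' := Ioo_subset_Icc_self hc
  rw [show Φ b - Φ a = f c * (b - a) by rw [hslope, div_mul_cancel₀ _ (sub_ne_zero.2 hlt.ne')]]
  exact ⟨mul_le_mul_of_nonneg_right (hf hc' (right_mem_Icc.2 hab) hc.2.le) (by linarith),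
    mul_le_mul_of_nonneg_right (hf (left_mem_Icc.2 hab) hc' hc.1.le) (by linarith)⟩

theorem AntitoneOn.sub_mem_Icc_sum_grid {a δ : ℝ} (hδ : 0 ≤ δ) (K : ℕ)
    (hΦ : ∀ x ∈ Icc a (a + δ * K), HasDerivAt Φ (f x) x)
    (hf : AntitoneOn f (Icc a (a + δ * K))) :
    Φ (a + δ * K) - Φ a ∈
      Icc (δ * ∑ i ∈ range K, f (a + δ * (i + 1))) (δ * ∑ i ∈ range K, f (a + δ * i)) := by
  have hsub : ∀ i < K, Icc (a + δ * i) (a + δ * (i + 1)) ⊆ Icc a (a + δ * K) := by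
    intro i hi
    have hi' : (i : ℝ) + 1 ≤ K := by exact_mod_cast hi
    exact Icc_subset_Icc (by nlinarith [i.cast_nonneg (α := ℝ)]) (by nlinarith)
  have hstep : ∀ i ∈ range K, Φ (a + δ * (i + 1)) - Φ (a + δ * i) ∈
      Icc (f (a + δ * (i + 1)) * δ) (f (a + δ * i) * δ) := by
    intro i hi
    have h := (hf.mono (hsub i (mem_range.1 hi))).sub_mem_Icc_of_hasDerivAt
      (by nlinarith) (fun x hx => hΦ x (hsub i (mem_range.1 hi) hx))
    simpa only [show a + δ * (i + 1) - (a + δ * i) = δ by ring] using h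
  have htel : Φ (a + δ * K) - Φ a = ∑ i ∈ range K, (Φ (a + δ * (i + 1)) - Φ (a + δ * i)) := by
    have := sum_range_sub (fun i : ℕ => Φ (a + δ * i)) K
    push_cast at this
    simp [this]
  rw [htel, mul_sum, mul_sum]
  exact ⟨sum_le_sum fun i hi => by linarith [(hstep i hi).1],
    sum_le_sum fun i hi => by linarith [(hstep i hi).2]⟩

theorem AntitoneOn.sub_mem_Icc_sum_grid_of_Ici {a δ : ℝ} (hδ : 0 ≤ δ) (K : ℕ)
    (hΦ : ∀ x ∈ Ici a, HasDerivAt Φ (f x) x) (hf : AntitoneOn f (Ici a)) :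
    Φ (a + δ * K) - Φ a ∈
      Icc (δ * ∑ i ∈ range K, f (a + δ * (i + 1))) (δ * ∑ i ∈ range K, f (a + δ * i)) :=
  (hf.mono Icc_subset_Ici_self).sub_mem_Icc_sum_grid hδ K
    (fun x hx => hΦ x (Icc_subset_Ici_self hx))

theorem AntitoneOn.summable_comp_grid {a δ : ℝ} (hδ : 0 < δ)
    (hΦ : ∀ x ∈ Ici a, HasDerivAt Φ (f x) x) (hf : AntitoneOn f (Ici a))
    (hf0 : ∀ x ∈ Ici a, 0 ≤ f x) (hlim : Tendsto Φ atTop (𝓝 0)) :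
    Summable fun i : ℕ => f (a + δ * i) := by
  have hgrid : Tendsto (fun K : ℕ => Φ (a + δ * K)) atTop (𝓝 0) :=
    hlim.comp (tendsto_atTop_add_const_left _ a
      (tendsto_natCast_atTop_atTop.const_mul_atTop hδ))
  obtain ⟨B, hB⟩ := hgrid.bddAbove_range
  have hmem : ∀ i : ℕ, a + δ * (i + 1) ∈ Ici a := fun i => by
    simp only [Set.mem_Ici]; nlinarith [i.cast_nonneg (α := ℝ)]
  refine (summable_nat_add_iff 1).1 (summable_of_sum_range_le (c := (B - Φ a) / δ)
    (fun i => by simpa using hf0 _ (hmem i)) fun K => ?_)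
  rw [le_div_iff₀ hδ]
  have := (hf.sub_mem_Icc_sum_grid_of_Ici hδ.le K hΦ).1
  have := hB (mem_range_self K)
  push_cast
  linarith

theorem AntitoneOn.neg_mem_Icc_tsum_grid {a δ : ℝ} (hδ : 0 < δ)
    (hΦ : ∀ x ∈ Ici a, HasDerivAt Φ (f x) x) (hf : AntitoneOn f (Ici a))
    (hf0 : ∀ x ∈ Ici a, 0 ≤ f x) (hlim : Tendsto Φ atTop (𝓝 0)) :
    -Φ a ∈ Icc (δ * ∑' i : ℕ, f (a + δ * (i + 1))) (δ * ∑' i : ℕ, f (a + δ * i)) := by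
  have hgrid : Tendsto (fun K : ℕ => Φ (a + δ * K) - Φ a) atTop (𝓝 (-Φ a)) := by
    simpa using (hlim.comp (tendsto_atTop_add_const_left _ a
      (tendsto_natCast_atTop_atTop.const_mul_atTop hδ))).sub_const (Φ a)
  have hsum := hf.summable_comp_grid hδ hΦ hf0 hlim
  have hsum' : Summable fun i : ℕ => f (a + δ * (i + 1)) := by
    simpa using (summable_nat_add_iff 1).2 hsum
  exact ⟨le_of_tendsto_of_tendsto' (hsum'.hasSum.tendsto_sum_nat.const_mul δ) hgrid
      fun K => (hf.sub_mem_Icc_sum_grid_of_Ici hδ.le K hΦ).1,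
    le_of_tendsto_of_tendsto' hgrid (hsum.hasSum.tendsto_sum_nat.const_mul δ)
      fun K => (hf.sub_mem_Icc_sum_grid_of_Ici hδ.le K hΦ).2⟩

end GridComparison

namespace XiSum

noncomputable section

def kernel (N x : ℝ) : ℝ := 1 / (x * √(N + x))

/-- Since `Real.log x = Real.log |x|`, this is a primitive of `kernel N` on both sides of `0`. -/
def primitive (N x : ℝ) : ℝ := (log x - 2 * log (√(N + x) + √N)) / √N

def symKernel (N x : ℝ) : ℝ := kernel N x + kernel N (-x)

def symPrimitive (N x : ℝ) : ℝ := primitive N x - primitive N (-x)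

def xiTerm (n k : ℕ) : ℝ :=
  if 1 ≤ k ∧ Odd ((n:ℤ) - (k:ℤ)) then 1 / (Real.sqrt k * ((n:ℝ) - k)) else 0

end

variable {N x : ℝ}

theorem hasDerivAt_primitive (hN : 0 < N) (hx : x ≠ 0) (hNx : 0 < N + x) :
    HasDerivAt (primitive N) (kernel N x) x := by
  have hsqrt : HasDerivAt (fun y => √(N + y)) (1 / (2 * √(N + x))) x := by
    simpa using ((hasDerivAt_id x).const_add N).sqrt hNx.ne'
  have hlog := ((hasDerivAt_log hx).sub
    (((hsqrt.add_const √N).log (by positivity)).const_mul 2)).div_const √N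
  refine hlog.congr_deriv ?_
  unfold kernel
  field_simp
  linear_combination sq_sqrt hNx.le - sq_sqrt hN.le

theorem hasDerivAt_symPrimitive (hN : 0 < N) (hx : x ≠ 0) (hxN : |x| < N) :
    HasDerivAt (symPrimitive N) (symKernel N x) x := by
  have hpos := hasDerivAt_primitive hN hx (by linarith [neg_abs_le x])
  have hneg := (hasDerivAt_primitive hN (neg_ne_zero.2 hx)
    (by linarith [le_abs_self x])).comp x (hasDerivAt_neg x)
  refine (hpos.sub hneg).congr_deriv ?_
  simp [symKernel]

theorem kernel_nonneg (hx : 0 ≤ x) : 0 ≤ kernel N x := by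
  unfold kernel; positivity

theorem antitoneOn_kernel (hN : 0 ≤ N) : AntitoneOn (kernel N) (Ioi 0) := by
  intro a (ha : 0 < a) b _ hab
  unfold kernel
  gcongr
  linarith

theorem neg_inv_le_kernel_neg (hx : 0 < x) (hxN : 1 ≤ N - x) : -x⁻¹ ≤ kernel N (-x) := by
  rw [kernel, ← sub_eq_add_neg, neg_mul, div_neg, neg_le_neg_iff, one_div]
  exact inv_anti₀ hx (le_mul_of_one_le_right hx.le (one_le_sqrt.2 hxN))

theorem symKernel_eq (hx : 0 < x) (hxN : x < N) :
    symKernel N x = -2 / (√(N - x) * √(N + x) * (√(N - x) + √(N + x))) := by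
  have ht : 0 < √(N - x) := sqrt_pos.2 (by linarith)
  have hs : 0 < √(N + x) := sqrt_pos.2 (by linarith)
  rw [symKernel, kernel, kernel, ← sub_eq_add_neg]
  field_simp
  linear_combination sq_sqrt (by linarith : 0 ≤ N - x) - sq_sqrt (by linarith : 0 ≤ N + x)

theorem symKernel_nonpos (hx : 0 < x) (hxN : x < N) : symKernel N x ≤ 0 := by
  rw [symKernel_eq hx hxN]
  exact div_nonpos_of_nonpos_of_nonneg (by norm_num) (by positivity)

theorem antitoneOn_symKernel : AntitoneOn (symKernel N) (Ioo 0 N) := by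
  intro a ⟨ha, _⟩ b ⟨hb, hbN⟩ hab
  have hsb : 0 < √(N + b) := sqrt_pos.2 (by linarith)
  have hprod : √(N - b) * √(N + b) ≤ √(N - a) * √(N + a) := by
    rw [← sqrt_mul (by linarith), ← sqrt_mul (by linarith)]
    exact sqrt_le_sqrt (by nlinarith)
  have hsum : √(N - b) + √(N + b) ≤ √(N - a) + √(N + a) := by
    refine le_of_pow_le_pow_left₀ two_ne_zero (by positivity) ?_
    have := sq_sqrt (by linarith : 0 ≤ N - a)
    have := sq_sqrt (by linarith : 0 ≤ N + a)
    have := sq_sqrt (by linarith : 0 ≤ N - b)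
    have := sq_sqrt (by linarith : 0 ≤ N + b)
    nlinarith
  rw [symKernel_eq ha (by linarith), symKernel_eq hb hbN, neg_div, neg_div, neg_le_neg_iff]
  exact div_le_div_of_nonneg_left zero_le_two (by positivity)
    (mul_le_mul hprod hsum (by positivity) (by positivity))

theorem tendsto_primitive_atTop (hN : 0 < N) : Tendsto (primitive N) atTop (𝓝 0) := by
  have hs : Tendsto (fun x => √(N + x) + √N) atTop atTop :=
    tendsto_atTop_add_const_right _ _
      (tendsto_sqrt_atTop.comp (tendsto_atTop_add_const_left _ N tendsto_id))
  have hlim := ((tendsto_const_nhds (x := (1 : ℝ)).sub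
    ((tendsto_const_nhds (x := 2 * √N)).div_atTop hs)).log (by norm_num)).div_const √N
  rw [sub_zero, log_one, zero_div] at hlim
  refine hlim.congr' ((eventually_gt_atTop 0).mono fun x hx => ?_)
  have hratio : 1 - 2 * √N / (√(N + x) + √N) = x / (√(N + x) + √N) ^ 2 := by
    field_simp
    linear_combination sq_sqrt (by linarith : 0 ≤ N + x) - sq_sqrt hN.le
  rw [primitive, hratio, log_div hx.ne' (by positivity), log_pow]
  push_cast
  ring

theorem neg_primitive_neg_mem_Icc (hx : 0 < x) (hxN : x ≤ N) :
    -primitive N (-x) ∈ Icc 0 (4 * √(N - x) / x) := by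
  have hN : 0 < N := hx.trans_le hxN
  have hr : 0 < √N := sqrt_pos.2 hN
  have ht : 0 ≤ √(N - x) := sqrt_nonneg _
  have hr2 := sq_sqrt hN.le
  have ht2 := sq_sqrt (by linarith : 0 ≤ N - x)
  have key : -primitive N (-x) = log ((√(N - x) + √N) ^ 2 / x) / √N := by
    rw [primitive, log_neg_eq_log, ← sub_eq_add_neg, log_div (by positivity) hx.ne', log_pow]
    push_cast
    ring
  have hge : 1 ≤ (√(N - x) + √N) ^ 2 / x := by
    rw [one_le_div hx]; nlinarith
  rw [key]
  refine ⟨div_nonneg (log_nonneg hge) hr.le, ?_⟩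
  have hlog := log_le_sub_one_of_pos (zero_lt_one.trans_le hge)
  have hsub : (√(N - x) + √N) ^ 2 / x - 1 ≤ 4 * √(N - x) * √N / x := by
    rw [div_sub_one hx.ne']
    gcongr
    nlinarith
  rw [div_le_iff₀ hr]
  calc log ((√(N - x) + √N) ^ 2 / x) ≤ 4 * √(N - x) * √N / x := hlog.trans hsub
    _ = 4 * √(N - x) / x * √N := by ring

theorem neg_symPrimitive_mem_Icc (hx : 0 < x) (hxN : x ≤ N) :
    -symPrimitive N x ∈ Icc 0 (4 * x / (N * √N)) := by
  have hN : 0 < N := hx.trans_le hxN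
  have hr : 0 < √N := sqrt_pos.2 hN
  have ht : 0 ≤ √(N - x) := sqrt_nonneg _
  have hrs : √N ≤ √(N + x) := sqrt_le_sqrt (by linarith)
  have hts : √(N - x) ≤ √(N + x) := sqrt_le_sqrt (by linarith)
  have hr2 := sq_sqrt hN.le
  have hs2 := sq_sqrt (by linarith : 0 ≤ N + x)
  have ht2 := sq_sqrt (by linarith : 0 ≤ N - x)
  have key : -symPrimitive N x = 2 * log ((√(N + x) + √N) / (√(N - x) + √N)) / √N := by
    rw [symPrimitive, primitive, primitive, log_neg_eq_log, ← sub_eq_add_neg,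
      log_div (by positivity) (by positivity)]
    ring
  have hge : 1 ≤ (√(N + x) + √N) / (√(N - x) + √N) := by
    rw [one_le_div (by positivity)]; linarith
  rw [key]
  refine ⟨div_nonneg (mul_nonneg zero_le_two (log_nonneg hge)) hr.le, ?_⟩
  have hlog := log_le_sub_one_of_pos (zero_lt_one.trans_le hge)
  have hsub : (√(N + x) + √N) / (√(N - x) + √N) - 1 ≤ 2 * x / N := by
    rw [div_sub_one (by positivity), div_le_div_iff₀ (by positivity) hN]
    nlinarith [mul_le_mul_of_nonneg_left (by linarith : √N ≤ √(N + x) + √(N - x))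
      (by linarith : 0 ≤ √(N + x) - √(N - x))]
  calc 2 * log ((√(N + x) + √N) / (√(N - x) + √N)) / √N ≤ 2 * (2 * x / N) / √N := by
        gcongr; exact hlog.trans hsub
    _ = 4 * x / (N * √N) := by ring

theorem neg_symPrimitive_one_le (hN : 1 ≤ N) : -symPrimitive N 1 ≤ 4 / N := by
  have hN0 : 0 < N := by linarith
  refine (neg_symPrimitive_mem_Icc one_pos hN).2.trans ?_
  rw [mul_one]
  exact div_le_div_of_nonneg_left (by norm_num) hN0
    (le_mul_of_one_le_right hN0.le (one_le_sqrt.2 hN))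

theorem neg_primitive_neg_le (hN : 8 ≤ N) (hx : N - 2 ≤ x) (hxN : x ≤ N) :
    -primitive N (-x) ≤ 8 / N := by
  have hx0 : 0 < x := by linarith
  refine (neg_primitive_neg_mem_Icc hx0 hxN).2.trans ?_
  have : √(N - x) ≤ 3 / 2 := sqrt_le_iff.2 ⟨by norm_num, by linarith⟩
  rw [div_le_div_iff₀ hx0 (by linarith)]
  nlinarith

section Tail

variable {a δ : ℝ}

theorem antitoneOn_kernel_Ici (hN : 0 < N) (ha : 0 < a) : AntitoneOn (kernel N) (Ici a) :=
  (antitoneOn_kernel hN.le).mono (Ici_subset_Ioi.2 ha)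

theorem hasDerivAt_primitive_of_mem_Ici (hN : 0 < N) (ha : 0 < a) :
    ∀ x ∈ Ici a, HasDerivAt (primitive N) (kernel N x) x := fun x hx =>
  hasDerivAt_primitive hN (ha.trans_le hx).ne' (by linarith [ha.trans_le hx])

theorem summable_kernel_grid (hN : 0 < N) (ha : 0 < a) (hδ : 0 < δ) :
    Summable fun i : ℕ => kernel N (a + δ * i) :=
  (antitoneOn_kernel_Ici hN ha).summable_comp_grid hδ (hasDerivAt_primitive_of_mem_Ici hN ha)
    (fun _ hx => kernel_nonneg (ha.trans_le hx).le) (tendsto_primitive_atTop hN)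

theorem neg_primitive_mem_Icc_tsum_kernel (hN : 0 < N) (ha : 0 < a) (hδ : 0 < δ) :
    -primitive N a ∈
      Icc (δ * ∑' i : ℕ, kernel N (a + δ * (i + 1))) (δ * ∑' i : ℕ, kernel N (a + δ * i)) :=
  (antitoneOn_kernel_Ici hN ha).neg_mem_Icc_tsum_grid hδ (hasDerivAt_primitive_of_mem_Ici hN ha)
    (fun _ hx => kernel_nonneg (ha.trans_le hx).le) (tendsto_primitive_atTop hN)

end Tail

theorem abs_sum_symKernel_add_tsum_kernel_le (hN : 8 ≤ N) (K : ℕ) (hJ : N - 2 ≤ 1 + 2 * K)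
    (hJN : 1 + 2 * K ≤ N - 1) :
    |∑ i ∈ range (K + 1), symKernel N (1 + 2 * i) +
        ∑' t : ℕ, kernel N (1 + 2 * K + 2 * (t + 1))| ≤ 6 / N := by
  have hN0 : 0 < N := by linarith
  set J : ℝ := 1 + 2 * K with hJdef
  have hJ0 : 0 < J := by positivity
  obtain ⟨hhead_lo, hhead_hi⟩ :=
    (antitoneOn_symKernel.mono fun x (hx : x ∈ Icc 1 J) => ⟨by linarith [hx.1], by linarith [hx.2]⟩
      ).sub_mem_Icc_sum_grid zero_le_two K fun x hx =>
        hasDerivAt_symPrimitive hN0 (by linarith [hx.1])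
          (by rw [abs_of_pos (by linarith [hx.1])]; linarith [hx.2])
  obtain ⟨htail_hi, htail_lo⟩ := neg_primitive_mem_Icc_tsum_kernel hN0 hJ0 two_pos
  have htail_split : ∑' t : ℕ, kernel N (J + 2 * t) =
      kernel N J + ∑' t : ℕ, kernel N (J + 2 * (t + 1)) := by
    rw [(summable_kernel_grid hN0 hJ0 two_pos).tsum_eq_zero_add]
    push_cast
    simp
  have hhead_last := sum_range_succ (fun i : ℕ => symKernel N (1 + 2 * i)) K
  have hhead_first := sum_range_succ' (fun i : ℕ => symKernel N (1 + 2 * i)) K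
  push_cast at hhead_first
  simp only [← hJdef, mul_zero, add_zero] at hhead_lo hhead_hi hhead_last hhead_first
  have hsym1 := symKernel_nonpos (N := N) one_pos (by linarith)
  have hΦ1_lo := (neg_symPrimitive_mem_Icc (N := N) one_pos (by linarith)).1
  have hΦ1_hi := neg_symPrimitive_one_le (N := N) (by linarith)
  have hΨJ_lo := (neg_primitive_neg_mem_Icc (N := N) hJ0 (by linarith)).1
  have hΨJ_hi := neg_primitive_neg_le hN hJ (by linarith)
  have hkJ := neg_inv_le_kernel_neg (N := N) hJ0 (by linarith)
  have hkJ' : J⁻¹ ≤ 6 / N := by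
    rw [inv_eq_one_div, div_le_div_iff₀ hJ0 hN0]
    linarith
  have h6 : 6 / N = (8 / N + 4 / N) / 2 := by ring
  simp only [symPrimitive, symKernel] at *
  rw [abs_le]
  constructor <;> linarith

theorem hasSum_kernel_oddGrid (hN : 0 < N) (K : ℕ) :
    HasSum (fun i : ℕ => kernel N (2 * i - (1 + 2 * K)))
      (∑ i ∈ range (K + 1), symKernel N (1 + 2 * i) +
        ∑' t : ℕ, kernel N (1 + 2 * K + 2 * (t + 1))) := by
  have htail : Summable fun t : ℕ => kernel N (1 + 2 * K + 2 * (t + 1)) := by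
    simpa using (summable_nat_add_iff 1).2 (summable_kernel_grid hN (by positivity) two_pos)
  have hneg : ∑ i ∈ range (K + 1), kernel N (2 * i - (1 + 2 * K)) =
      ∑ i ∈ range (K + 1), kernel N (-(1 + 2 * i)) := by
    rw [← sum_range_reflect]
    refine sum_congr rfl fun i hi => ?_
    rw [Nat.add_sub_cancel, Nat.cast_sub (Nat.le_of_lt_succ (mem_range.1 hi))]
    ring_nf
  have hpos : ∑ i ∈ range (K + 1), kernel N (2 * ((i + (K + 1) : ℕ) : ℝ) - (1 + 2 * K)) =
      ∑ i ∈ range (K + 1), kernel N (1 + 2 * i) :=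
    sum_congr rfl fun i _ => by push_cast; ring_nf
  have hshift : (fun t : ℕ => kernel N (2 * ((t + (K + 1) + (K + 1) : ℕ) : ℝ) - (1 + 2 * K))) =
      fun t : ℕ => kernel N (1 + 2 * K + 2 * (t + 1)) := by
    funext t; push_cast; ring_nf
  have hsym : ∑ i ∈ range (K + 1), kernel N (-(1 + 2 * i)) +
      ∑ i ∈ range (K + 1), kernel N (1 + 2 * i) = ∑ i ∈ range (K + 1), symKernel N (1 + 2 * i) := by
    rw [← sum_add_distrib]
    exact sum_congr rfl fun i _ => add_comm _ _
  rw [← hasSum_nat_add_iff' (K + 1), ← hasSum_nat_add_iff' (K + 1), hshift, hneg, hpos, sub_sub,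
    hsym, add_sub_cancel_left]
  exact htail.hasSum

theorem hasSum_xiTerm {n K : ℕ} (hK : n / 2 = K + 1) :
    HasSum (xiTerm n) (-(∑ i ∈ range (K + 1), symKernel n (1 + 2 * i) +
      ∑' t : ℕ, kernel n (1 + 2 * K + 2 * (t + 1)))) := by
  have hn : 0 < (n : ℝ) := by norm_cast; omega
  let e : ℕ → ℕ := fun i => n % 2 + 2 * i + 1
  have he : Function.Injective e := fun i j h => by simp only [e] at h; omega
  have hsupp : ∀ k ∉ Set.range e, xiTerm n k = 0 := by
    intro k hk
    rw [xiTerm, if_neg]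
    rintro ⟨hk1, hodd⟩
    rw [Int.odd_iff] at hodd
    exact hk ⟨(k - n % 2 - 1) / 2, by simp only [e]; omega⟩
  have hterm : xiTerm n ∘ e = fun i : ℕ => -kernel n (2 * i - (1 + 2 * K)) := by
    funext i
    have hcast : ((e i : ℕ) : ℝ) = n + (2 * i - (1 + 2 * K)) := by
      rw [show e i = n + 2 * i - (1 + 2 * K) by simp only [e]; omega, Nat.cast_sub (by omega)]
      push_cast
      ring
    have hodd : Odd ((n : ℤ) - (e i : ℕ)) := Int.odd_iff.2 (by simp only [e]; omega)
    rw [Function.comp_apply, xiTerm, if_pos ⟨Nat.le_add_left _ _, hodd⟩, hcast, kernel,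
      sub_add_cancel_left, mul_neg, div_neg, mul_comm]
  rw [← he.hasSum_iff hsupp, hterm]
  exact (hasSum_kernel_oddGrid hn K).neg

end XiSum

/-- |ξ(n)| = |Σ_{k≥1, n−k odd} 1/(√k (n−k))| ≤ C/n for n ≥ 8. -/
theorem stmt6 : ∃ C : ℝ, ∀ n : ℕ, 8 ≤ n →
    |∑' k : ℕ, (if 1 ≤ k ∧ Odd ((n:ℤ) - (k:ℤ)) then 1 / (Real.sqrt k * ((n:ℝ) - k)) else 0)| ≤
      C / n := by
  refine ⟨6, fun n hn => ?_⟩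
  obtain ⟨K, hK⟩ : ∃ K, n / 2 = K + 1 := ⟨n / 2 - 1, by omega⟩
  have hN : (8 : ℝ) ≤ n := by exact_mod_cast hn
  have h2K : (2 * (K + 1) : ℝ) ≤ n ∧ (n : ℝ) ≤ 2 * (K + 1) + 1 := by
    constructor <;> norm_cast <;> omega
  change |∑' k, XiSum.xiTerm n k| ≤ _
  rw [(XiSum.hasSum_xiTerm hK).tsum_eq, abs_neg]
  exact XiSum.abs_sum_symKernel_add_tsum_kernel_le hN K (by linarith) (by linarith)
end

section
/- The integral ∫_0^1 √2 / (w(t)·√(1+w(t))) dt, where w(t) = √(1−t²), equals 2·log(1+√2). -/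
/-!
Substituting `t = sin θ` turns the integrand into `sec (θ / 2)`, whose primitive
`2 log (sec (θ / 2) + tan (θ / 2))` reads `2 log (√2 + √(1 - u)) - log (1 + u)` in terms of
`u = cos θ = √(1 - t²)`. Composed with `t ↦ √(1 - t²)` it is an antiderivative of the integrand on
`(0, 1)`, continuous on `[0, 1]`. The integrand is nonnegative, hence integrable as the derivative
of a continuous function, and the integral is the value at `u = 0` minus the value at `u = 1`,
that is `2 log (1 + √2) - 0`.
-/

open Real Set intervalIntegral

noncomputable def logSecTanHalf (u : ℝ) : ℝ :=
  2 * log (√2 + √(1 - u)) - log (1 + u)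

lemma continuousOn_logSecTanHalf : ContinuousOn logSecTanHalf (Ioi (-1)) := by
  intro u hu
  have h : 0 < 1 + u := by linarith [mem_Ioi.1 hu]
  unfold logSecTanHalf
  refine ContinuousAt.continuousWithinAt ?_
  fun_prop (disch := positivity)

lemma hasDerivAt_logSecTanHalf {u : ℝ} (hu : u ∈ Ioo (-1) 1) :
    HasDerivAt logSecTanHalf (-√2 / (√(1 - u) * (1 + u))) u := by
  obtain ⟨hu₁, hu₂⟩ := hu
  have hs : 0 < √(1 - u) := sqrt_pos.2 (by linarith)
  have hs_sq : √(1 - u) ^ 2 = 1 - u := sq_sqrt (by linarith)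
  have hu : 0 < 1 + u := by linarith
  have h2 : √2 ^ 2 = 2 := sq_sqrt zero_le_two
  have hsqrt : HasDerivAt (fun x => √(1 - x)) (-1 / (2 * √(1 - u))) u := by
    simpa using ((hasDerivAt_id' u).const_sub 1).sqrt (by linarith)
  have hG : HasDerivAt logSecTanHalf
      (2 * (-1 / (2 * √(1 - u)) / (√2 + √(1 - u))) - 1 / (1 + u)) u :=
    (((hsqrt.const_add √2).log (by positivity)).const_mul 2).sub
      (((hasDerivAt_id' u).const_add 1).log hu.ne')
  convert hG using 1
  field_simp
  linear_combination hs_sq - h2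

lemma hasDerivAt_sqrt_one_sub_sq {t : ℝ} (ht : t ∈ Ioo (-1) 1) :
    HasDerivAt (fun x => √(1 - x ^ 2)) (-t / √(1 - t ^ 2)) t := by
  have hpos : 0 < 1 - t ^ 2 := by nlinarith [ht.1, ht.2]
  convert ((hasDerivAt_pow 2 t).const_sub 1).sqrt hpos.ne' using 1
  field_simp
  ring

lemma sqrt_one_sub_mul_sqrt_one_add_sqrt_one_sub_sq {t : ℝ} (ht : t ∈ Icc 0 1) :
    √(1 - √(1 - t ^ 2)) * √(1 + √(1 - t ^ 2)) = t := by
  have h : 0 ≤ 1 - t ^ 2 := by nlinarith [ht.1, ht.2]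
  have hw : √(1 - t ^ 2) ≤ 1 := sqrt_le_one.2 (sub_le_self 1 (sq_nonneg t))
  rw [← sqrt_mul (by linarith)]
  conv_rhs => rw [← sqrt_sq ht.1]
  congr 1
  linear_combination -sq_sqrt h

lemma hasDerivAt_logSecTanHalf_sqrt_one_sub_sq {t : ℝ} (ht : t ∈ Ioo 0 1) :
    HasDerivAt (fun x => logSecTanHalf √(1 - x ^ 2))
      (√2 / (√(1 - t ^ 2) * √(1 + √(1 - t ^ 2)))) t := by
  obtain ⟨ht₀, ht₁⟩ := ht
  have ht_eq := sqrt_one_sub_mul_sqrt_one_add_sqrt_one_sub_sq ⟨ht₀.le, ht₁.le⟩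
  have hw₁ : √(1 - t ^ 2) < 1 := (sqrt_lt' one_pos).2 (by nlinarith)
  have hchain := (hasDerivAt_logSecTanHalf ⟨by linarith [sqrt_nonneg (1 - t ^ 2)], hw₁⟩).comp t
    (hasDerivAt_sqrt_one_sub_sq ⟨by linarith, ht₁⟩)
  set w := √(1 - t ^ 2)
  have hw : 0 < w := sqrt_pos.2 (by nlinarith)
  have hs_sq : √(1 + w) ^ 2 = 1 + w := sq_sqrt (by positivity)
  have hv : 0 < √(1 - w) := sqrt_pos.2 (by linarith)
  refine hchain.congr_deriv ?_
  field_simp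
  linear_combination -√(1 + w) * ht_eq + √(1 - w) * hs_sq

lemma logSecTanHalf_zero : logSecTanHalf 0 = 2 * log (1 + √2) := by
  simp [logSecTanHalf, add_comm]

lemma logSecTanHalf_one : logSecTanHalf 1 = 0 := by
  simp [logSecTanHalf, log_sqrt, one_add_one_eq_two, mul_div_cancel₀]

/-- ∫_0^1 √2/(w(t)√(1+w(t))) dt = 2 log(1+√2), w(t) = √(1−t²). -/
theorem stmt8 :
    ∫ t in (0:ℝ)..1,
        Real.sqrt 2 / (Real.sqrt (1 - t^2) * Real.sqrt (1 + Real.sqrt (1 - t^2))) =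
      2 * Real.log (1 + Real.sqrt 2) := by
  have hcont : ContinuousOn (fun t => logSecTanHalf √(1 - t ^ 2)) (Icc 0 1) :=
    (continuousOn_logSecTanHalf.comp_continuous (by fun_prop)
      fun t => show -1 < √(1 - t ^ 2) by linarith [sqrt_nonneg (1 - t ^ 2)]).continuousOn
  have hderiv := fun t (ht : t ∈ Ioo (0 : ℝ) 1) => hasDerivAt_logSecTanHalf_sqrt_one_sub_sq ht
  have hint := (intervalIntegrable_iff_integrableOn_Ioc_of_le zero_le_one).2 <|
    integrableOn_deriv_of_nonneg hcont hderiv fun t _ => by positivity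
  rw [integral_eq_sub_of_hasDerivAt_of_le zero_le_one hcont hderiv hint]
  simp [logSecTanHalf_zero, logSecTanHalf_one]
end

section
/- For r > 0 and positive integers m ≥ 2, the quantity ω_m = |cos(r√(m−1/4))/√(m−1/2) − cos(r√(m+1/4))/√m| satisfies ω_m ≤ (1/4)·((4/3)r/m + (16/9)/m^{3/2}) ≤ (r/2 + 1)/m. -/
lemma cos_lip_aux (x y : ℝ) : |Real.cos x - Real.cos y| ≤ |x - y| := by
  rw [Real.cos_sub_cos, abs_mul, abs_mul]
  have h1 : |Real.sin ((x + y) / 2)| ≤ 1 := Real.abs_sin_le_one _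
  have h2 : |Real.sin ((x - y) / 2)| ≤ |(x - y) / 2| := Real.abs_sin_le_abs
  have h3 : |(-2 : ℝ)| = 2 := by norm_num
  have h4 : |(x - y) / 2| = |x - y| / 2 := by rw [abs_div]; norm_num
  rw [h3]
  have h2' : |Real.sin ((x - y) / 2)| ≤ |x - y| / 2 := h2.trans_eq h4
  nlinarith [mul_le_mul h1 h2' (abs_nonneg _) zero_le_one]

set_option maxHeartbeats 1000000 in
/-- bound on ω_m = |cos(r√(m−1/4))/√(m−1/2) − cos(r√(m+1/4))/√m|. -/
theorem stmt14 (r : ℝ) (hr : 0 < r) (m : ℕ) (hm : 2 ≤ m) :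
    |Real.cos (r * Real.sqrt ((m:ℝ) - 1/4)) / Real.sqrt ((m:ℝ) - 1/2) -
      Real.cos (r * Real.sqrt ((m:ℝ) + 1/4)) / Real.sqrt m| ≤
        (1/4) * ((4/3) * r / m + (16/9) / (m:ℝ) ^ ((3:ℝ)/2)) ∧
    (1/4) * ((4/3) * r / m + (16/9) / (m:ℝ) ^ ((3:ℝ)/2)) ≤ (r/2 + 1) / m := by
  have hM : (2:ℝ) ≤ (m:ℝ) := by exact_mod_cast hm
  set M : ℝ := (m:ℝ) with hMdef
  have h1 : (0:ℝ) < M - 1/2 := by linarith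
  have h2 : (0:ℝ) < M - 1/4 := by linarith
  have h3 : (0:ℝ) < M + 1/4 := by linarith
  have h4 : (0:ℝ) < M := by linarith
  set sa := Real.sqrt (M - 1/4) with hsadef
  set sb := Real.sqrt (M + 1/4) with hsbdef
  set sc := Real.sqrt (M - 1/2) with hscdef
  set sm := Real.sqrt M with hsmdef
  have hsa : sa^2 = M - 1/4 := Real.sq_sqrt h2.le
  have hsb : sb^2 = M + 1/4 := Real.sq_sqrt h3.le
  have hsc : sc^2 = M - 1/2 := Real.sq_sqrt h1.le
  have hsm : sm^2 = M := Real.sq_sqrt h4.le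
  have hsapos : 0 < sa := Real.sqrt_pos.2 h2
  have hsbpos : 0 < sb := Real.sqrt_pos.2 h3
  have hscpos : 0 < sc := Real.sqrt_pos.2 h1
  have hsmpos : 0 < sm := Real.sqrt_pos.2 h4
  have hca : sc ≤ sa := Real.sqrt_le_sqrt (by linarith)
  have hcb : sc ≤ sb := Real.sqrt_le_sqrt (by linarith)
  have hcm : sc ≤ sm := Real.sqrt_le_sqrt (by linarith)
  have hab : sa ≤ sb := Real.sqrt_le_sqrt (by linarith)
  have hsm1 : (1:ℝ) ≤ sm := by nlinarith [hsm, hsmpos]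
  have hrpow : M ^ ((3:ℝ)/2) = M * sm := by
    rw [show (3:ℝ)/2 = 1 + 1/2 by norm_num, Real.rpow_add h4, Real.rpow_one,
      ← Real.sqrt_eq_rpow]
  have hsplit : (1/4) * ((4/3) * r / M + (16/9) / (M * sm)) =
      r / (3 * M) + (4/9) / (M * sm) := by
    field_simp
    ring
  constructor
  · -- main bound
    have hcos1 : |Real.cos (r * sa) - Real.cos (r * sb)| ≤ r * (sb - sa) := by
      refine (cos_lip_aux (r * sa) (r * sb)).trans_eq ?_
      rw [abs_of_nonpos (by nlinarith)]
      ring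
    have key : Real.cos (r * sa) / sc - Real.cos (r * sb) / sm =
        (Real.cos (r * sa) - Real.cos (r * sb)) / sc +
          Real.cos (r * sb) * (1 / sc - 1 / sm) := by
      field_simp
      ring
    rw [key]
    have hT1 : |(Real.cos (r * sa) - Real.cos (r * sb)) / sc| ≤ r / (3 * M) := by
      rw [abs_div, abs_of_pos hscpos, div_le_div_iff₀ hscpos (by linarith)]
      have hsub : (sb - sa) * (sb + sa) = 1/2 := by
        linear_combination hsb - hsa
      have h2c : (3:ℝ) * M ≤ 2 * (sb + sa) * sc := by
        nlinarith [mul_nonneg (sub_nonneg.2 hca) hscpos.le,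
          mul_nonneg (sub_nonneg.2 hcb) hscpos.le, hsc]
      have hnn : (0:ℝ) ≤ sb - sa := by linarith
      have hkey : (sb - sa) * (3 * M) ≤ sc := by
        have step := mul_le_mul_of_nonneg_left h2c hnn
        have heq : (sb - sa) * (2 * (sb + sa) * sc) = sc := by
          linear_combination (2 * sc) * hsub
        linarith
      calc |Real.cos (r * sa) - Real.cos (r * sb)| * (3 * M)
          ≤ (r * (sb - sa)) * (3 * M) :=
            mul_le_mul_of_nonneg_right hcos1 (by linarith)
        _ = r * ((sb - sa) * (3 * M)) := by ring
        _ ≤ r * sc := mul_le_mul_of_nonneg_left hkey hr.le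
    have hT2 : |Real.cos (r * sb) * (1 / sc - 1 / sm)| ≤ (4/9) / (M * sm) := by
      have hle : 1 / sm ≤ 1 / sc := one_div_le_one_div_of_le hscpos hcm
      have habs : |Real.cos (r * sb) * (1 / sc - 1 / sm)| ≤ 1 / sc - 1 / sm := by
        rw [abs_mul, abs_of_nonneg (show (0:ℝ) ≤ 1 / sc - 1 / sm by linarith)]
        nlinarith [Real.abs_cos_le_one (r * sb), sub_nonneg.2 hle]
      refine habs.trans ?_
      rw [div_sub_div _ _ (ne_of_gt hscpos) (ne_of_gt hsmpos),
        div_le_div_iff₀ (by positivity) (by positivity)]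
      have hsub : (sm - sc) * (sm + sc) = 1/2 := by
        linear_combination hsm - hsc
      have h9 : (9:ℝ) * M ≤ 8 * (sm + sc) * sc := by
        nlinarith [mul_nonneg (sub_nonneg.2 hcm) hscpos.le, hsc]
      have hnn : (0:ℝ) ≤ sm - sc := by linarith
      have hkey : (sm - sc) * (9 * M) ≤ 4 * sc := by
        have step := mul_le_mul_of_nonneg_left h9 hnn
        have heq : (sm - sc) * (8 * (sm + sc) * sc) = 4 * sc := by
          linear_combination (8 * sc) * hsub
        linarith
      rw [one_mul, mul_one]
      calc (sm - sc) * (M * sm) = ((sm - sc) * (9 * M)) * sm / 9 := by ring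
        _ ≤ (4 * sc) * sm / 9 := by
            apply div_le_div_of_nonneg_right _ (by norm_num)
            exact mul_le_mul_of_nonneg_right hkey hsmpos.le
        _ = 4/9 * (sc * sm) := by ring
    calc |(Real.cos (r * sa) - Real.cos (r * sb)) / sc +
          Real.cos (r * sb) * (1 / sc - 1 / sm)|
        ≤ |(Real.cos (r * sa) - Real.cos (r * sb)) / sc| +
            |Real.cos (r * sb) * (1 / sc - 1 / sm)| := abs_add_le _ _
      _ ≤ r / (3 * M) + (4/9) / (M * sm) := add_le_add hT1 hT2
      _ = (1/4) * ((4/3) * r / M + (16/9) / M ^ ((3:ℝ)/2)) := by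
          rw [hrpow, hsplit]
  · -- easy bound
    rw [hrpow, hsplit]
    have hA : r / (3 * M) ≤ (r/2) / M := by
      rw [div_le_div_iff₀ (by positivity) h4]
      nlinarith
    have hB : (4/9) / (M * sm) ≤ 1 / M := by
      rw [div_le_div_iff₀ (by positivity) h4]
      nlinarith
    have hC : (r/2 + 1) / M = (r/2) / M + 1 / M := add_div _ _ _
    linarith
end

section
/- Let p be a positive integer and P = p + 1/2, and suppose P ≥ 4. Define S₂ = Σ_{j=p}^∞ (1/(j+1/2))·(p+j+1)^{−1/2} and I₂ = ∫_P^∞ (1/x)(P+x)^{−1/2} dx. Then S₂ ≥ I₂ ≥ S₂ − 1/(√2·P^{3/2}); in particular 0 ≤ S₂ − I₂ ≤ 1/(√2 P^{3/2}). -/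
open Set MeasureTheory Real Filter
open scoped Topology

/-- S₂ ≥ I₂ ≥ S₂ − 1/(√2 P^{3/2}). -/
theorem stmt15 (p : ℕ) (hp : 4 ≤ p) :
    (∑' j : ℕ, (if p ≤ j then 1 / (((j:ℝ) + 1/2) * Real.sqrt ((p:ℝ) + j + 1)) else 0)) ≥
      (∫ x in Set.Ioi ((p:ℝ) + 1/2), 1 / (x * Real.sqrt (((p:ℝ) + 1/2) + x))) ∧
    (∫ x in Set.Ioi ((p:ℝ) + 1/2), 1 / (x * Real.sqrt (((p:ℝ) + 1/2) + x))) ≥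
      (∑' j : ℕ, (if p ≤ j then 1 / (((j:ℝ) + 1/2) * Real.sqrt ((p:ℝ) + j + 1)) else 0)) -
        1 / (Real.sqrt 2 * ((p:ℝ) + 1/2) ^ ((3:ℝ)/2)) := by
  have hp4 : (4:ℝ) ≤ (p:ℝ) := by exact_mod_cast hp
  set P : ℝ := (p:ℝ) + 1/2 with hPdef
  have hP0 : 0 < P := by rw [hPdef]; linarith
  set φ : ℝ → ℝ := fun x => 1 / (x * Real.sqrt (P + x)) with hφ
  set f : ℕ → ℝ := fun j => if p ≤ j then 1 / (((j:ℝ) + 1/2) * Real.sqrt ((p:ℝ) + j + 1)) else 0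
    with hfdef
  set a : ℕ → ℝ := fun i => φ (P + i) with hadef
  -- φ is nonnegative on positives
  have hφ0 : ∀ x : ℝ, 0 < x → 0 ≤ φ x := by
    intro x hx
    have : 0 ≤ x * Real.sqrt (P + x) := mul_nonneg hx.le (Real.sqrt_nonneg _)
    exact div_nonneg (by norm_num) this
  -- antitone on Ici P
  have hanti : AntitoneOn φ (Ici P) := by
    intro x hx y hy hxy
    have hx0 : 0 < x := lt_of_lt_of_le hP0 hx
    have hy0 : 0 < y := lt_of_lt_of_le hP0 hy
    have hPx : 0 < P + x := by linarith
    have h1 : 0 < x * Real.sqrt (P + x) := by positivity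
    show 1 / (y * Real.sqrt (P + y)) ≤ 1 / (x * Real.sqrt (P + x))
    apply one_div_le_one_div_of_le h1
    have h2 : Real.sqrt (P + x) ≤ Real.sqrt (P + y) := Real.sqrt_le_sqrt (by linarith)
    nlinarith [Real.sqrt_nonneg (P + x), Real.sqrt_nonneg (P + y)]
  -- integrability on Ioi P
  have hmeas : AEStronglyMeasurable φ (volume.restrict (Ioi P)) := by
    apply Measurable.aestronglyMeasurable
    simp only [hφ, one_div]
    exact (measurable_id.mul
      ((Real.continuous_sqrt.measurable).comp (measurable_const.add measurable_id))).inv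
  have hint : IntegrableOn φ (Ioi P) := by
    have hbig : IntegrableOn (fun x : ℝ => x ^ (-(3/2) : ℝ)) (Ioi P) :=
      integrableOn_Ioi_rpow_of_lt (by norm_num) hP0
    refine Integrable.mono' hbig hmeas ?_
    filter_upwards [ae_restrict_mem measurableSet_Ioi] with x hx
    have hx0 : 0 < x := hP0.trans hx
    rw [Real.norm_eq_abs, abs_of_nonneg (hφ0 x hx0)]
    calc φ x = 1 / (x * Real.sqrt (P + x)) := rfl
      _ ≤ 1 / (x * Real.sqrt x) := by
          apply one_div_le_one_div_of_le (by positivity)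
          gcongr
          linarith
      _ = x ^ (-(3/2) : ℝ) := by
          rw [Real.rpow_neg hx0.le, show (3/2:ℝ) = 1 + 1/2 by norm_num, Real.rpow_add hx0,
            Real.rpow_one, ← Real.sqrt_eq_rpow, one_div]
  -- integral nonneg
  have hI0 : 0 ≤ ∫ x in Ioi P, φ x :=
    setIntegral_nonneg measurableSet_Ioi fun x hx => hφ0 x (hP0.trans hx)
  -- interval integral bound: ∫ P..P+n ≤ ∫ Ioi P
  have hIle : ∀ n : ℕ, (∫ x in P..P + n, φ x) ≤ ∫ x in Ioi P, φ x := by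
    intro n
    rw [intervalIntegral.integral_of_le (le_add_of_nonneg_right (Nat.cast_nonneg n))]
    apply setIntegral_mono_set hint
    · filter_upwards [ae_restrict_mem measurableSet_Ioi] with x hx using hφ0 x (hP0.trans hx)
    · exact HasSubset.Subset.eventuallyLE Ioc_subset_Ioi_self
  -- antitone on Icc P (P+n)
  have hantiIcc : ∀ n : ℕ, AntitoneOn φ (Icc P (P + n)) :=
    fun n => hanti.mono (Icc_subset_Ici_self)
  -- a values: a i = f (i + p)
  have haf : ∀ i : ℕ, f (i + p) = a i := by
    intro i
    simp only [hfdef, hadef, hφ, if_pos (Nat.le_add_left p i)]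
    have h1 : ((i + p : ℕ) : ℝ) + 1/2 = P + i := by push_cast [hPdef]; ring
    have h2 : (p:ℝ) + ((i + p : ℕ):ℝ) + 1 = P + (P + i) := by push_cast [hPdef]; ring
    rw [h1, h2]
  have ha0 : ∀ i, 0 ≤ a i := fun i => hφ0 _ (by positivity)
  -- partial sum bound : ∑ range n a ≤ a 0 + I₂
  have hsumb : ∀ n : ℕ, ∑ i ∈ Finset.range n, a i ≤ a 0 + ∫ x in Ioi P, φ x := by
    intro n
    cases n with
    | zero =>
      simp only [Finset.sum_range_zero]
      exact add_nonneg (ha0 0) hI0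
    | succ m =>
      rw [Finset.sum_range_succ']
      have h1 : ∑ i ∈ Finset.range m, a (i + 1) ≤ ∫ x in P..P + m, φ x :=
        (hantiIcc m).sum_le_integral
      linarith [hIle m]
  have hsa : Summable a := summable_of_sum_range_le ha0 hsumb
  have htsum_ab : ∑' i, a i ≤ a 0 + ∫ x in Ioi P, φ x :=
    Real.tsum_le_of_sum_range_le ha0 hsumb
  -- tsum f = tsum a
  have hff : ∑' j, f j = ∑' i, a i := by
    rw [← Function.Injective.tsum_eq (g := fun i : ℕ => i + p)
      (add_left_injective p) ?_]
    · exact tsum_congr haf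
    · intro j hj
      simp only [Function.mem_support, hfdef] at hj
      by_cases h : p ≤ j
      · exact ⟨j - p, show j - p + p = j by omega⟩
      · simp [h] at hj
  -- I₂ ≤ tsum a
  have hIleS : (∫ x in Ioi P, φ x) ≤ ∑' i, a i := by
    have htend : Tendsto (fun n : ℕ => ∫ x in P..P + n, φ x) atTop
        (𝓝 (∫ x in Ioi P, φ x)) := by
      apply intervalIntegral_tendsto_integral_Ioi P hint
      exact tendsto_atTop_add_const_left _ _ tendsto_natCast_atTop_atTop
    refine le_of_tendsto htend (Eventually.of_forall fun n => ?_)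
    calc (∫ x in P..P + n, φ x) ≤ ∑ i ∈ Finset.range n, φ (P + i) :=
          (hantiIcc n).integral_le_sum
      _ = ∑ i ∈ Finset.range n, a i := rfl
      _ ≤ ∑' i, a i := Summable.sum_le_tsum _ (fun i _ => ha0 i) hsa
  -- a 0 = 1/(√2 P^{3/2})
  have ha0eq : a 0 = 1 / (Real.sqrt 2 * P ^ ((3:ℝ)/2)) := by
    have h0 : a 0 = 1 / (P * Real.sqrt (P + P)) := by
      simp [hadef, hφ]
    rw [h0, show P + P = 2 * P by ring, Real.sqrt_mul (by norm_num) P,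
      show (3/2:ℝ) = 1 + 1/2 by norm_num, Real.rpow_add hP0, Real.rpow_one,
      ← Real.sqrt_eq_rpow]
    ring
  constructor
  · rw [ge_iff_le, hff]; exact hIleS
  · rw [ge_iff_le, hff, ← ha0eq]
    linarith [htsum_ab]
end

section
/- Let p ≥ 2 be an integer and P = p + 1/2. Define s₂ = Σ_{j=p}^∞ (1/j)(p+j)^{−1/2} and S₂ = Σ_{j=p}^∞ (1/(j+1/2))(p+j+1)^{−1/2}. Then |S₂ − s₂| ≤ 2 p^{−3/2}. -/
/-! Splitting the difference of the two summands at `1 / (j √(p + j + 1))` shows that it lies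
between `0` and `j^(-5/2)`, and `j^(-5/2) ≤ 2 (j^(-3/2) - (j + 1)^(-3/2))` for `j ≥ 1`. Hence the
series of differences is dominated by a telescoping series whose sum is `2 p^(-3/2)`. -/

open Real Finset

lemma abs_tsum_sub_tsum_le_of_telescoping {f g T : ℕ → ℝ} (hf : Summable f) (hg : Summable g)
    (hT : ∀ n, 0 ≤ T n) (hfg : ∀ n, |f n - g n| ≤ T n - T (n + 1)) :
    |∑' n, f n - ∑' n, g n| ≤ T 0 := by
  have hpartial (n : ℕ) : ∑ i ∈ range n, |f i - g i| ≤ T 0 :=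
    calc ∑ i ∈ range n, |f i - g i| ≤ ∑ i ∈ range n, (T i - T (i + 1)) := sum_le_sum fun i _ => hfg i
      _ = T 0 - T n := sum_range_sub' T n
      _ ≤ T 0 := sub_le_self _ (hT n)
  calc |∑' n, f n - ∑' n, g n| = ‖∑' n, (f n - g n)‖ := by rw [hf.tsum_sub hg, norm_eq_abs]
    _ ≤ ∑' n, ‖f n - g n‖ := norm_tsum_le_tsum_norm (hf.sub hg).norm
    _ ≤ T 0 := tsum_le_of_sum_range_le (fun _ => norm_nonneg _) hpartial

lemma one_div_mul_sqrt_eq_rpow {x : ℝ} (hx : 0 ≤ x) : 1 / (x * √x) = x ^ (-(3 : ℝ) / 2) := by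
  rw [show -(3 : ℝ) / 2 = -(1 + 1 / 2) by norm_num, rpow_neg hx, rpow_add' hx (by norm_num),
    rpow_one, ← sqrt_eq_rpow, one_div]

lemma one_div_sq_mul_sqrt_le_two_mul_sub {x : ℝ} (hx : 1 ≤ x) :
    1 / (x ^ 2 * √x) ≤ 2 * (1 / (x * √x) - 1 / ((x + 1) * √(x + 1))) := by
  obtain ⟨u, hu0, rfl⟩ : ∃ u, 1 ≤ u ∧ u ^ 2 = x :=
    ⟨√x, one_le_sqrt.2 hx, sq_sqrt (by linarith)⟩
  set v := √(u ^ 2 + 1)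
  have hv : v ^ 2 = u ^ 2 + 1 := sq_sqrt (by positivity)
  have huv : u ≤ v := le_sqrt_of_sq_le (by linarith)
  rw [sqrt_sq (by linarith), show (u ^ 2 + 1) * v = v ^ 3 by rw [← hv]; ring]
  have hu5 : u ^ 5 ≤ u ^ 4 * v := by
    rw [pow_succ]; exact mul_le_mul_of_nonneg_left huv (by positivity)
  -- by `hu5` and `v ^ 2 = u ^ 2 + 1`, after division by `v` this reduces to `1 ≤ u ^ 2`
  have key : 0 ≤ 2 * u ^ 2 * v ^ 3 - 2 * u ^ 5 - v ^ 3 := by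
    nlinarith [mul_nonneg (by linarith : (0 : ℝ) ≤ v) (by nlinarith : (0 : ℝ) ≤ u ^ 2 - 1)]
  have hv0 : 0 < v := by linarith
  have e : 2 * (1 / (u ^ 2 * u) - 1 / v ^ 3) - 1 / ((u ^ 2) ^ 2 * u) =
      (2 * u ^ 2 * v ^ 3 - 2 * u ^ 5 - v ^ 3) / (u ^ 5 * v ^ 3) := by
    field_simp
  linarith [div_nonneg key (by positivity : (0 : ℝ) ≤ u ^ 5 * v ^ 3)]

lemma one_div_mul_sqrt_sub_le {q x : ℝ} (hq : 0 ≤ q) (hx : 0 < x) :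
    1 / (x * √(q + x)) - 1 / (x * √(q + x + 1)) ≤ 1 / (2 * x ^ 2 * √x) := by
  set a := √(q + x)
  set b := √(q + x + 1)
  have ha : a ^ 2 = q + x := sq_sqrt (by linarith)
  have hb : b ^ 2 = q + x + 1 := sq_sqrt (by linarith)
  have hsa : √x ≤ a := sqrt_le_sqrt (by linarith)
  have hsb : √x ≤ b := sqrt_le_sqrt (by linarith)
  have ha0 : 0 < a := (sqrt_pos.2 hx).trans_le hsa
  have hb0 : 0 < b := (sqrt_pos.2 hx).trans_le hsb
  have hab : x ≤ a * b := by
    simpa [mul_self_sqrt hx.le] using mul_le_mul hsa hsb (sqrt_nonneg x) ha0.le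
  calc 1 / (x * a) - 1 / (x * b) = 1 / (x * (a * b) * (a + b)) := by
        field_simp
        linear_combination hb - ha
    _ ≤ 1 / (x * x * (√x + √x)) := by gcongr
    _ = 1 / (2 * x ^ 2 * √x) := by ring

lemma one_div_mul_sub_one_div_add_half_mul_le {x b : ℝ} (hx : 0 < x) (hb : √x ≤ b) :
    1 / (x * b) - 1 / ((x + 1 / 2) * b) ≤ 1 / (2 * x ^ 2 * √x) := by
  have hb0 : 0 < b := (sqrt_pos.2 hx).trans_le hb
  calc 1 / (x * b) - 1 / ((x + 1 / 2) * b) = 1 / (2 * x * (x + 1 / 2) * b) := by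
        field_simp
        ring
    _ ≤ 1 / (2 * x * x * √x) := by gcongr; linarith
    _ = 1 / (2 * x ^ 2 * √x) := by ring

lemma one_div_add_half_mul_sqrt_le {q x : ℝ} (hq : 0 ≤ q) (hx : 0 < x) :
    1 / ((x + 1 / 2) * √(q + x + 1)) ≤ 1 / (x * √(q + x)) := by
  apply one_div_le_one_div_of_le (by positivity)
  exact mul_le_mul (by linarith) (sqrt_le_sqrt (by linarith)) (sqrt_nonneg _) (by linarith)

lemma abs_sub_one_div_mul_sqrt_le {q x : ℝ} (hq : 0 ≤ q) (hx : 1 ≤ x) :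
    |1 / ((x + 1 / 2) * √(q + x + 1)) - 1 / (x * √(q + x))| ≤
      2 * x ^ (-(3 : ℝ) / 2) - 2 * (x + 1) ^ (-(3 : ℝ) / 2) := by
  have hx0 : 0 < x := by linarith
  rw [abs_sub_comm, abs_of_nonneg (sub_nonneg.2 (one_div_add_half_mul_sqrt_le hq hx0)),
    ← one_div_mul_sqrt_eq_rpow hx0.le, ← one_div_mul_sqrt_eq_rpow (by linarith)]
  have h₁ := one_div_mul_sqrt_sub_le hq hx0
  have h₂ := one_div_mul_sub_one_div_add_half_mul_le hx0 (b := √(q + x + 1))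
    (sqrt_le_sqrt (by linarith))
  have h₃ := one_div_sq_mul_sqrt_le_two_mul_sub hx
  have : 1 / (2 * x ^ 2 * √x) = 1 / (x ^ 2 * √x) / 2 := by ring
  linarith

lemma summable_one_div_mul_sqrt_add (p : ℕ) (hp : 1 ≤ p) :
    Summable fun j : ℕ => if p ≤ j then 1 / ((j : ℝ) * √((p : ℝ) + j)) else 0 := by
  refine (summable_nat_rpow.2 (by norm_num : -(3 : ℝ) / 2 < -1)).of_nonneg_of_le
    (fun j => by split_ifs <;> positivity) fun j => ?_
  split_ifs with hj
  · have hj0 : (0 : ℝ) < j := by exact_mod_cast hp.trans hj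
    rw [← one_div_mul_sqrt_eq_rpow hj0.le]
    gcongr
    linarith [(Nat.cast_nonneg p : (0 : ℝ) ≤ p)]
  · positivity

/-- |S₂ − s₂| ≤ 2 p^{−3/2}. -/
theorem stmt18 (p : ℕ) (hp : 2 ≤ p) :
    |(∑' j : ℕ, (if p ≤ j then 1 / (((j:ℝ) + 1/2) * Real.sqrt ((p:ℝ) + j + 1)) else 0)) -
     (∑' j : ℕ, (if p ≤ j then 1 / ((j:ℝ) * Real.sqrt ((p:ℝ) + j)) else 0))| ≤
      2 * (p:ℝ) ^ (-(3:ℝ)/2) := by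
  have hp1 : 1 ≤ p := by omega
  have hG := summable_one_div_mul_sqrt_add p hp1
  have hF : Summable fun j : ℕ =>
      if p ≤ j then 1 / (((j : ℝ) + 1 / 2) * √((p : ℝ) + j + 1)) else 0 := by
    refine hG.of_nonneg_of_le (fun j => by split_ifs <;> positivity) fun j => ?_
    split_ifs with hj
    · exact one_div_add_half_mul_sqrt_le (Nat.cast_nonneg p) (by exact_mod_cast hp1.trans hj)
    · rfl
  -- capping the index below at `p` makes the telescoping bound `0` where both summands vanish
  refine (abs_tsum_sub_tsum_le_of_telescoping
    (T := fun j => 2 * ((max p j : ℕ) : ℝ) ^ (-(3 : ℝ) / 2)) hF hG (fun j => by positivity)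
    fun j => ?_).trans_eq (by simp)
  by_cases hj : p ≤ j
  · rw [if_pos hj, if_pos hj, max_eq_right hj, max_eq_right (by omega), Nat.cast_succ]
    exact abs_sub_one_div_mul_sqrt_le (Nat.cast_nonneg p) (by exact_mod_cast hp1.trans hj)
  · rw [if_neg hj, if_neg hj, max_eq_left (by omega), max_eq_left (by omega)]
    simp
end

section
/- Let p ≥ 2 be an integer. Define S₁ = Σ_{j=0}^{p−1} (1/(j+1/2))·(1/√(p−j) − 1/√(p+j+1)) and s₁ = Σ_{j=1}^{p−1} (1/j)·(1/√(p−j) − 1/√(p+j)). Then |S₁ − s₁| ≤ C·log(ep)/p^{3/2} for an absolute constant C. -/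
/-!
The `j = 0` term of `S₁` is `2 (1/√p - 1/√(p+1)) ≤ p^{-3/2}`. For `1 ≤ j < p` the difference of
the `j`-th summands is `(1/(j+½) - 1/j)(1/√(p-j) - 1/√(p+j+1)) + (1/j)(1/√(p+j) - 1/√(p+j+1))`,
and both parts are at most `p^{-1/2}` times `1/(j(p-j))`, resp. `1/(jp)`. Partial fractions
`1/(j(p-j)) = (1/j + 1/(p-j))/p` and the symmetry `j ↦ p - j` bound the sum over `j` by
`3 H_{p-1} / p^{3/2}`, and `H_{p-1} ≤ 1 + log p = log (e p)`.
-/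

open Finset Real

lemma one_div_sqrt_sub_one_div_sqrt_nonneg {a b : ℝ} (ha : 0 < a) (hab : a ≤ b) :
    0 ≤ 1 / √a - 1 / √b :=
  sub_nonneg.2 <| one_div_le_one_div_of_le (sqrt_pos.2 ha) (sqrt_le_sqrt hab)

-- `1/√a - 1/√b = (b - a) / (√a √b (√a + √b))` and `√a + √b ≥ 2√a`.
lemma one_div_sqrt_sub_one_div_sqrt_le {a b : ℝ} (ha : 0 < a) (hab : a ≤ b) :
    1 / √a - 1 / √b ≤ (b - a) / (2 * a * √b) := by
  have hb : 0 < b := ha.trans_le hab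
  have sa := sqrt_pos.2 ha
  have sb := sqrt_pos.2 hb
  have hsab : √a ≤ √b := sqrt_le_sqrt hab
  rw [div_sub_div _ _ sa.ne' sb.ne', div_le_div_iff₀ (by positivity) (by positivity)]
  nlinarith [sq_sqrt ha.le, sq_sqrt hb.le, mul_pos sa sb,
    mul_nonneg (mul_pos sa sb).le (sub_nonneg.2 hsab)]

lemma one_div_sqrt_sub_one_div_sqrt_le_of_le {a b c : ℝ} (ha : 0 < a) (hab : a ≤ b)
    (hc : 0 < c) (hcb : c ≤ b) :
    1 / √a - 1 / √b ≤ (b - a) / (2 * a * √c) :=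
  (one_div_sqrt_sub_one_div_sqrt_le ha hab).trans <|
    div_le_div_of_nonneg_left (by linarith) (by positivity) (by gcongr)

lemma abs_one_div_add_half_sub_one_div_le {j : ℝ} (hj : 0 < j) :
    |1 / (j + 1 / 2) - 1 / j| ≤ 1 / (2 * j ^ 2) := by
  rw [abs_sub_comm, abs_of_nonneg (sub_nonneg.2 (one_div_le_one_div_of_le hj (by linarith))),
    div_sub_div _ _ hj.ne' (by positivity), div_le_div_iff₀ (by positivity) (by positivity)]
  nlinarith

lemma abs_one_div_add_half_sub_one_div_mul_le {j P : ℝ} (hj : 1 ≤ j) (hjP : j < P) :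
    |(1 / (j + 1 / 2) - 1 / j) * (1 / √(P - j) - 1 / √(P + j + 1))|
      ≤ 1 / √P * (1 / (j * (P - j))) := by
  have hPj : 0 < P - j := by linarith
  have hsP : 0 < √P := sqrt_pos.2 (by linarith)
  rw [abs_mul, abs_of_nonneg (one_div_sqrt_sub_one_div_sqrt_nonneg hPj (by linarith))]
  calc |1 / (j + 1 / 2) - 1 / j| * (1 / √(P - j) - 1 / √(P + j + 1))
      ≤ 1 / (2 * j ^ 2) * ((P + j + 1 - (P - j)) / (2 * (P - j) * √P)) := by
        gcongr
        · exact one_div_sqrt_sub_one_div_sqrt_nonneg hPj (by linarith)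
        · exact abs_one_div_add_half_sub_one_div_le (by linarith)
        · exact one_div_sqrt_sub_one_div_sqrt_le_of_le hPj (by linarith) (by linarith)
            (by linarith)
    _ ≤ 1 / √P * (1 / (j * (P - j))) := by
        rw [show P + j + 1 - (P - j) = 2 * j + 1 by ring]
        field_simp
        nlinarith

lemma abs_one_div_mul_one_div_sqrt_sub_le {j P : ℝ} (hj : 0 < j) (hP : 0 < P) :
    |1 / j * (1 / √(P + j) - 1 / √(P + j + 1))| ≤ 1 / √P * (1 / (j * P)) := by
  have hPj : 0 < P + j := by linarith
  have hsP : 0 < √P := sqrt_pos.2 hP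
  rw [abs_mul, abs_of_pos (one_div_pos.2 hj),
    abs_of_nonneg (one_div_sqrt_sub_one_div_sqrt_nonneg hPj (by linarith))]
  calc 1 / j * (1 / √(P + j) - 1 / √(P + j + 1))
      ≤ 1 / j * ((P + j + 1 - (P + j)) / (2 * (P + j) * √P)) := by
        gcongr
        exact one_div_sqrt_sub_one_div_sqrt_le_of_le hPj (by linarith) hP (by linarith)
    _ ≤ 1 / √P * (1 / (j * P)) := by
        rw [show P + j + 1 - (P + j) = 1 by ring]
        field_simp
        nlinarith

lemma abs_summand_sub_le {j P : ℝ} (hj : 1 ≤ j) (hjP : j < P) :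
    |1 / (j + 1 / 2) * (1 / √(P - j) - 1 / √(P + j + 1))
        - 1 / j * (1 / √(P - j) - 1 / √(P + j))|
      ≤ 1 / √P * (1 / (j * (P - j)) + 1 / (j * P)) := by
  calc _ = |(1 / (j + 1 / 2) - 1 / j) * (1 / √(P - j) - 1 / √(P + j + 1))
          + 1 / j * (1 / √(P + j) - 1 / √(P + j + 1))| := by ring_nf
    _ ≤ _ := (abs_add_le _ _).trans <| by
        rw [mul_add]
        exact add_le_add (abs_one_div_add_half_sub_one_div_mul_le hj hjP)
          (abs_one_div_mul_one_div_sqrt_sub_le (by linarith) (by linarith))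

lemma abs_two_mul_one_div_sqrt_sub_le {P : ℝ} (hP : 0 < P) :
    |2 * (1 / √P - 1 / √(P + 1))| ≤ 1 / √P * (1 / P) := by
  have hsP : 0 < √P := sqrt_pos.2 hP
  rw [abs_of_nonneg (mul_nonneg zero_le_two
    (one_div_sqrt_sub_one_div_sqrt_nonneg hP (by linarith)))]
  calc 2 * (1 / √P - 1 / √(P + 1))
      ≤ 2 * ((P + 1 - P) / (2 * P * √P)) := by
        gcongr
        exact one_div_sqrt_sub_one_div_sqrt_le_of_le hP (by linarith) hP (by linarith)
    _ = 1 / √P * (1 / P) := by field_simp; ring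

lemma sum_Ico_one_div_mul_sub (p : ℕ) :
    ∑ j ∈ Ico 1 p, 1 / ((j : ℝ) * (p - j)) = 2 / p * ∑ j ∈ Ico 1 p, 1 / (j : ℝ) := by
  have hreflect : ∑ j ∈ Ico 1 p, 1 / ((p : ℝ) - j) = ∑ j ∈ Ico 1 p, 1 / (j : ℝ) := by
    calc _ = ∑ j ∈ Ico 1 p, 1 / ((p - j : ℕ) : ℝ) :=
          sum_congr rfl fun j hj => by rw [Nat.cast_sub (mem_Ico.1 hj).2.le]
      _ = _ := by rw [sum_Ico_reflect (fun j => 1 / (j : ℝ)) 1 (Nat.le_succ p)]; simp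
  rcases Nat.eq_zero_or_pos p with rfl | hp
  · simp
  calc _ = ∑ j ∈ Ico 1 p, 1 / (p : ℝ) * (1 / (j : ℝ) + 1 / (p - j)) := by
        refine sum_congr rfl fun j hj => ?_
        obtain ⟨hj1, hjp⟩ := mem_Ico.1 hj
        have : (1 : ℝ) ≤ j := by exact_mod_cast hj1
        have : (j : ℝ) < p := by exact_mod_cast hjp
        field_simp [show (p : ℝ) - j ≠ 0 by linarith]
        ring
    _ = _ := by rw [← mul_sum, sum_add_distrib, hreflect]; ring

lemma sum_Ico_one_div_le_log (p : ℕ) (hp : 0 < p) :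
    ∑ j ∈ Ico 1 p, 1 / (j : ℝ) ≤ log (exp 1 * p) := by
  rw [log_mul (exp_ne_zero 1) (by positivity), log_exp]
  calc _ ≤ ∑ j ∈ Icc 1 p, 1 / (j : ℝ) :=
        sum_le_sum_of_subset_of_nonneg Ico_subset_Icc_self fun _ _ _ => by positivity
    _ = harmonic p := by simp [harmonic_eq_sum_Icc]
    _ ≤ 1 + log p := harmonic_le_one_add_log p

lemma abs_sum_Ico_summand_sub_le (p : ℕ) :
    |∑ j ∈ Ico 1 p, (1 / ((j : ℝ) + 1 / 2) * (1 / √(p - j) - 1 / √(p + j + 1))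
        - 1 / (j : ℝ) * (1 / √(p - j) - 1 / √(p + j)))|
      ≤ 1 / √p * (3 / p * ∑ j ∈ Ico 1 p, 1 / (j : ℝ)) := by
  calc _ ≤ ∑ j ∈ Ico 1 p, 1 / √p * (1 / ((j : ℝ) * (p - j)) + 1 / (j * p)) := by
        refine (abs_sum_le_sum_abs _ _).trans (sum_le_sum fun j hj => ?_)
        obtain ⟨hj1, hjp⟩ := mem_Ico.1 hj
        exact abs_summand_sub_le (by exact_mod_cast hj1) (by exact_mod_cast hjp)
    _ = _ := by
        have hsum : ∑ j ∈ Ico 1 p, 1 / ((j : ℝ) * p) = 1 / p * ∑ j ∈ Ico 1 p, 1 / (j : ℝ) := by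
          rw [mul_sum]
          exact sum_congr rfl fun j _ => by ring
        rw [← mul_sum, sum_add_distrib, sum_Ico_one_div_mul_sub, hsum]
        ring

/-- |S₁ − s₁| ≤ C log(ep)/p^{3/2}. -/
theorem stmt19 : ∃ C : ℝ, ∀ p : ℕ, 2 ≤ p →
    |(∑ j ∈ Finset.range p,
        (1 / ((j:ℝ) + 1/2)) * (1 / Real.sqrt ((p:ℝ) - j) - 1 / Real.sqrt ((p:ℝ) + j + 1))) -
     (∑ j ∈ Finset.Ico 1 p,
        (1 / (j:ℝ)) * (1 / Real.sqrt ((p:ℝ) - j) - 1 / Real.sqrt ((p:ℝ) + j)))| ≤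
      C * Real.log (Real.exp 1 * p) / (p:ℝ) ^ ((3:ℝ)/2) := by
  refine ⟨4, fun p hp => ?_⟩
  have hP : (0 : ℝ) < p := by positivity
  have hlog : 1 ≤ log (exp 1 * p) := by
    rw [log_mul (exp_ne_zero 1) hP.ne', log_exp]
    linarith [log_nonneg (show (1 : ℝ) ≤ p by exact_mod_cast (by omega : 1 ≤ p))]
  have hH := sum_Ico_one_div_le_log p (by omega)
  rw [range_eq_Ico, sum_eq_sum_Ico_succ_bot (by omega), add_sub_assoc, ← sum_sub_distrib]
  have hT0 := abs_two_mul_one_div_sqrt_sub_le hP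
  set L := log (exp 1 * p)
  clear_value L
  have hS := abs_sum_Ico_summand_sub_le p
  rw [show (p : ℝ) ^ ((3 : ℝ) / 2) = p * √p by
    rw [sqrt_eq_rpow, ← rpow_one_add' hP.le (by norm_num)]; norm_num]
  calc _ ≤ _ := abs_add_le _ _
    _ ≤ 1 / √p * (1 / p) + 1 / √p * (3 / p * L) := by
        simp only [Nat.cast_zero, sub_zero, add_zero, zero_add, one_div_one_div]
        exact add_le_add hT0 (hS.trans (by gcongr))
    _ ≤ _ := by
        field_simp
        linarith
end
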